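/- arXiv:2109.03059 — 4 statements merged into one kernel-verified Lean document; each statement's English description precedes it below -/
import Mathlib

section
/- Let p ∈ (0,∞) and let b_1, b_2 be slowly varying functions on (0,1). Let σ: [0,1] → [0,1] be the increasing bijection defined by t^p = (1/C) ∫_0^{σ(t)^p} [b_1(s) b_2(s)^{-1}]^p ds, where C = ∫_0^1 [b_1(s) b_2(s)^{-1}]^p ds ∈ (0,∞). Then σ^{-1}(t) ≈ t · b_1(t^p) b_2(t^p)^{-1} on (0,1). -/
open MeasureTheory Set ENNReal Filter Topology

noncomputable section

/-- The nonincreasing rearrangement of a real-valued function, valued in `ℝ≥0∞`. -/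
def rearr {α : Type*} [MeasurableSpace α] (μ : Measure α) (f : α → ℝ) (t : ℝ) : ℝ≥0∞ :=
  sInf {lam : ℝ≥0∞ | μ {x | lam < ENNReal.ofReal |f x|} ≤ ENNReal.ofReal t}

/-- Lebesgue measure restricted to the interval `(0,1)`. -/
def mRes : Measure ℝ := volume.restrict (Ioo (0:ℝ) 1)

/-- Rearrangement of an `ℝ≥0∞`-valued function on `(0,1)`. -/
def rearrE (f : ℝ → ℝ≥0∞) (t : ℝ) : ℝ≥0∞ :=
  sInf {lam : ℝ≥0∞ | mRes {x | lam < f x} ≤ ENNReal.ofReal t}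

/-- The Peetre K-functional associated with two extended-real-valued functionals. -/
def Kfun {α : Type*} (N0 N1 : (α → ℝ) → ℝ≥0∞) (f : α → ℝ) (t : ℝ) : ℝ≥0∞ :=
  ⨅ (g : α → ℝ) (h : α → ℝ) (_ : f = g + h), N0 g + ENNReal.ofReal t * N1 h

/-- Orlicz–Karamata quasinorm `‖b(t) f^*(t)‖_{L^p(0,1)}` for finite `p`. -/
def OKnorm {α : Type*} [MeasurableSpace α] (p : ℝ) (b : ℝ → ℝ) (μ : Measure α)
    (f : α → ℝ) : ℝ≥0∞ :=
  (∫⁻ t in Ioo (0:ℝ) 1, (ENNReal.ofReal (b t) * rearr μ f t) ^ p) ^ (1/p)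

/-- Orlicz–Karamata quasinorm `sup_{0<t<1} b(t) f^*(t)`, the case `p = ∞`. -/
def OKnormInf {α : Type*} [MeasurableSpace α] (b : ℝ → ℝ) (μ : Measure α)
    (f : α → ℝ) : ℝ≥0∞ :=
  ⨆ t ∈ Ioo (0:ℝ) 1, ENNReal.ofReal (b t) * rearr μ f t

/-- Two functions are equivalent (≈) on a set. -/
def EquivOn (u v : ℝ → ℝ) (s : Set ℝ) : Prop :=
  ∃ c C : ℝ, 0 < c ∧ 0 < C ∧ ∀ t ∈ s, c * v t ≤ u t ∧ u t ≤ C * v t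

/-- A slowly varying function on `(0,1)`. -/
def SlowlyVarying (b : ℝ → ℝ) : Prop :=
  Measurable b ∧ (∀ t ∈ Ioo (0:ℝ) 1, 0 < b t) ∧
  ∀ ε : ℝ, 0 < ε →
    (∃ be : ℝ → ℝ, MonotoneOn be (Ioo (0:ℝ) 1) ∧
      EquivOn (fun t => t ^ ε * b t) be (Ioo (0:ℝ) 1)) ∧
    (∃ bm : ℝ → ℝ, AntitoneOn bm (Ioo (0:ℝ) 1) ∧
      EquivOn (fun t => t ^ (-ε) * b t) bm (Ioo (0:ℝ) 1))

/-- `σ` is the increasing bijection of `[0,1]` with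
`t^p = (1/C) ∫_0^{σ(t)^p} (b₁/b₂)^p`. -/
def IsSigma (p : ℝ) (b1 b2 : ℝ → ℝ) (σ : ℝ → ℝ) : Prop :=
  StrictMonoOn σ (Icc (0:ℝ) 1) ∧ σ '' (Icc (0:ℝ) 1) = Icc (0:ℝ) 1 ∧
  σ 0 = 0 ∧ σ 1 = 1 ∧
  IntegrableOn (fun s => (b1 s / b2 s) ^ p) (Ioo (0:ℝ) 1) ∧
  (0 < ∫ s in Ioo (0:ℝ) 1, (b1 s / b2 s) ^ p) ∧
  ∀ t ∈ Icc (0:ℝ) 1,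
    t ^ p = (∫ s in Ioo (0:ℝ) 1, (b1 s / b2 s) ^ p)⁻¹ *
      ∫ s in Ioo (0:ℝ) ((σ t) ^ p), (b1 s / b2 s) ^ p

/-- `σi` is the inverse function of `σ` on `[0,1]`. -/
def IsSigmaInv (σ σi : ℝ → ℝ) : Prop :=
  MapsTo σi (Icc (0:ℝ) 1) (Icc (0:ℝ) 1) ∧
  ∀ t ∈ Icc (0:ℝ) 1, σ (σi t) = t ∧ σi (σ t) = t

/-- A `(p,b₁,b₂)`-gaussible operator. -/
def Gaussible {α β : Type*} [MeasurableSpace α] [MeasurableSpace β] (p : ℝ)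
    (b1 b2 σi : ℝ → ℝ) (μ : Measure α) (ν : Measure β)
    (T : (α → ℝ) → β → ℝ) : Prop :=
  ∃ c : ℝ≥0∞, c ≠ ⊤ ∧ ∀ f : α → ℝ, MemLp f (ENNReal.ofReal p) μ →
    ∀ t ∈ Ioo (0:ℝ) 1,
      ∫⁻ s in Ioo (0:ℝ) t, (rearr ν (T f) s * ENNReal.ofReal (b1 s)) ^ p ≤
        c * ∫⁻ s in Ioo (0:ℝ) t,
          (rearr μ f ((σi (s ^ (1/p))) ^ p) * ENNReal.ofReal (b1 s / b2 s)) ^ p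

/-- A rearrangement-invariant quasi-Banach function norm on `(0,1)`. -/
def IsRIQnorm (N : (ℝ → ℝ≥0∞) → ℝ≥0∞) : Prop :=
  (∀ f, (∀ᵐ t ∂mRes, f t = 0) ↔ N f = 0) ∧
  (∀ f (c : ℝ≥0∞), N (fun t => c * f t) = c * N f) ∧
  (∃ C : ℝ≥0∞, 1 ≤ C ∧ C ≠ ⊤ ∧ ∀ f g, N (fun t => f t + g t) ≤ C * (N f + N g)) ∧
  (∀ f g, (∀ᵐ t ∂mRes, f t ≤ g t) → N f ≤ N g) ∧
  (∀ (f : ℕ → ℝ → ℝ≥0∞) (g : ℝ → ℝ≥0∞), (∀ n, ∀ᵐ t ∂mRes, f n t ≤ f (n+1) t) →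
      (∀ᵐ t ∂mRes, (⨆ n, f n t) = g t) → N g = ⨆ n, N (f n)) ∧
  (N (fun _ => 1) ≠ ⊤) ∧
  (∀ f g, (∀ t ∈ Ioo (0:ℝ) 1, rearrE f t = rearrE g t) → N f = N g)

/-- A rearrangement-invariant Banach function norm on `(0,1)`. -/
def IsRIBnorm (N : (ℝ → ℝ≥0∞) → ℝ≥0∞) : Prop :=
  IsRIQnorm N ∧ (∀ f g, N (fun t => f t + g t) ≤ N f + N g) ∧
  ∃ C : ℝ≥0∞, C ≠ ⊤ ∧ ∀ f, (∫⁻ t in Ioo (0:ℝ) 1, f t) ≤ C * N f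

/-- The norm of the space `X^{1/p}`, i.e. `‖f‖ = ‖f^{1/p}‖_X^p`. -/
def pPow (p : ℝ) (N : (ℝ → ℝ≥0∞) → ℝ≥0∞) (f : ℝ → ℝ≥0∞) : ℝ≥0∞ :=
  (N (fun t => (f t) ^ (1/p))) ^ p

/-- `p`-convexity of a rearrangement-invariant quasinorm. -/
def PConvex (p : ℝ) (N : (ℝ → ℝ≥0∞) → ℝ≥0∞) : Prop :=
  IsRIBnorm (pPow p N)

/-- The associate norm. -/
def assocN (N : (ℝ → ℝ≥0∞) → ℝ≥0∞) (f : ℝ → ℝ≥0∞) : ℝ≥0∞ :=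
  ⨆ (g : ℝ → ℝ≥0∞) (_ : N g ≤ 1), ∫⁻ t in Ioo (0:ℝ) 1, f t * g t

/-- The norm in the rearrangement-invariant space over `(R,μ)` with representation norm `N`. -/
def spaceNorm {α : Type*} [MeasurableSpace α] (N : (ℝ → ℝ≥0∞) → ℝ≥0∞)
    (μ : Measure α) (f : α → ℝ) : ℝ≥0∞ :=
  N (rearr μ f)

/-- The operator `U_{b₁,b₂,p} f(t) = f^*(σ⁻¹(t^{1/p})^p) b₂(t)⁻¹`. -/
def Uop (p : ℝ) (b2 σi : ℝ → ℝ) (f : ℝ → ℝ) (t : ℝ) : ℝ≥0∞ :=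
  rearr mRes f ((σi (t ^ (1/p))) ^ p) * ENNReal.ofReal (b2 t)⁻¹

/-- The operator `S_{b₁,p} f(t) = (∫_t^1 f(s)^p/(s b₁(s)^p) ds)^{1/p}`
for nonnegative `f`. -/
def SopE (p : ℝ) (b1 : ℝ → ℝ) (f : ℝ → ℝ≥0∞) (t : ℝ) : ℝ≥0∞ :=
  (∫⁻ s in Ioo t 1, (f s) ^ p / ENNReal.ofReal (s * b1 s ^ p)) ^ (1/p)

/-- The operator `T_{b₁,b₂,p} f(t) = sup_{t ≤ s < 1} f^*(σ(s^{1/p})^p)/b₁(σ(s^{1/p})^p)^p`. -/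
def Topr (p : ℝ) (b1 σ : ℝ → ℝ) (f : ℝ → ℝ≥0∞) (t : ℝ) : ℝ≥0∞ :=
  ⨆ s ∈ Ico t 1, rearrE f ((σ (s ^ (1/p))) ^ p) / ENNReal.ofReal ((b1 ((σ (s ^ (1/p))) ^ p)) ^ p)

/-- The class `B_p` of pairs of slowly varying functions. -/
def InBp (p : ℝ) (b1 b2 : ℝ → ℝ) : Prop :=
  SlowlyVarying b1 ∧ SlowlyVarying b2 ∧
  ContinuousOn b1 (Ioo (0:ℝ) 1) ∧ ContinuousOn b2 (Ioo (0:ℝ) 1) ∧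
  AntitoneOn b1 (Ioo (0:ℝ) 1) ∧ MonotoneOn b2 (Ioo (0:ℝ) 1) ∧
  (∃ δ ∈ Ioo (0:ℝ) 1, EquivOn b1 (fun t => b1 (t * (b1 t / b2 t) ^ p)) (Ioo (0:ℝ) δ)) ∧
  (∃ M : ℝ, ∀ t ∈ Ioo (0:ℝ) 1, b2 t ^ p * ∫ s in Ioo t 1, 1 / (s * b1 s ^ p) ≤ M)

/-- Boundedness of an operator from `X(R,μ)` to `Y(S,ν)`. -/
def BddOp {α β : Type*} [MeasurableSpace α] [MeasurableSpace β]
    (NX NY : (ℝ → ℝ≥0∞) → ℝ≥0∞) (μ : Measure α) (ν : Measure β)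
    (T : (α → ℝ) → β → ℝ) : Prop :=
  ∃ c : ℝ≥0∞, 0 < c ∧ c ≠ ⊤ ∧ ∀ f : α → ℝ, spaceNorm NY ν (T f) ≤ c * spaceNorm NX μ f

/-- The Brudnyi–Krugljak class `B(X₀,X₁;Y₀,Y₁)`. -/
def ClassB {α β : Type*} (N0 N1 : (α → ℝ) → ℝ≥0∞) (M0 M1 : (β → ℝ) → ℝ≥0∞)
    (T : (α → ℝ) → β → ℝ) : Prop :=
  ∃ C : ℝ≥0∞, C ≠ ⊤ ∧ ∀ f0 f1 : α → ℝ, N0 f0 ≠ ⊤ → N1 f1 ≠ ⊤ →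
    ∀ ε : ℝ≥0∞, 0 < ε → ∃ g0 g1 : β → ℝ, T (f0 + f1) = g0 + g1 ∧
      M0 g0 ≤ C * N0 f0 + ε ∧ M1 g1 ≤ C * N1 f1 + ε

end
set_option maxHeartbeats 1000000 in
theorem stmt_4 (p : ℝ) (hp : 0 < p) (b1 b2 σ σi : ℝ → ℝ)
    (h1 : SlowlyVarying b1) (h2 : SlowlyVarying b2)
    (hσ : IsSigma p b1 b2 σ) (hσi : IsSigmaInv σ σi) :
    ∃ c C : ℝ, 0 < c ∧ 0 < C ∧ ∀ t ∈ Ioo (0:ℝ) 1,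
      c * (t * b1 (t ^ p) / b2 (t ^ p)) ≤ σi t ∧
      σi t ≤ C * (t * b1 (t ^ p) / b2 (t ^ p)) := by
  obtain ⟨hσmono, hσimg, hσ0, hσ1, hψint, hApos, heq⟩ := hσ
  obtain ⟨hσimap, hσinv⟩ := hσi
  obtain ⟨hb1meas, hb1pos, hb1sv⟩ := h1
  obtain ⟨hb2meas, hb2pos, hb2sv⟩ := h2
  have hε : (0:ℝ) < 1/(4*p) := by positivity
  obtain ⟨⟨be1, hbe1mono, c1, C1, hc1, hC1, hbe1⟩, ⟨bm1, hbm1anti, d1, D1, hd1, hD1, hbm1⟩⟩ :=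
    hb1sv _ hε
  obtain ⟨⟨be2, hbe2mono, c2, C2, hc2, hC2, hbe2⟩, ⟨bm2, hbm2anti, d2, D2, hd2, hD2, hbm2⟩⟩ :=
    hb2sv _ hε
  set ε : ℝ := 1/(4*p) with hεdef
  set A : ℝ := ∫ s in Ioo (0:ℝ) 1, (b1 s / b2 s) ^ p with hA
  have hψpos : ∀ s ∈ Ioo (0:ℝ) 1, 0 < b1 s / b2 s := fun s hs =>
    div_pos (hb1pos s hs) (hb2pos s hs)
  -- positivity of the monotone/antitone comparison functions
  have hbe1pos : ∀ s ∈ Ioo (0:ℝ) 1, 0 < be1 s := by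
    intro s hs
    have h := (hbe1 s hs).2
    simp only at h
    have hb : 0 < s ^ ε * b1 s := mul_pos (Real.rpow_pos_of_pos hs.1 ε) (hb1pos s hs)
    nlinarith
  have hbm1pos : ∀ s ∈ Ioo (0:ℝ) 1, 0 < bm1 s := by
    intro s hs
    have h := (hbm1 s hs).2
    simp only at h
    have hb : 0 < s ^ (-ε) * b1 s := mul_pos (Real.rpow_pos_of_pos hs.1 _) (hb1pos s hs)
    nlinarith
  have hbe2pos : ∀ s ∈ Ioo (0:ℝ) 1, 0 < be2 s := by
    intro s hs
    have h := (hbe2 s hs).2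
    simp only at h
    have hb : 0 < s ^ ε * b2 s := mul_pos (Real.rpow_pos_of_pos hs.1 ε) (hb2pos s hs)
    nlinarith
  have hbm2pos : ∀ s ∈ Ioo (0:ℝ) 1, 0 < bm2 s := by
    intro s hs
    have h := (hbm2 s hs).2
    simp only at h
    have hb : 0 < s ^ (-ε) * b2 s := mul_pos (Real.rpow_pos_of_pos hs.1 _) (hb2pos s hs)
    nlinarith
  set G : ℝ → ℝ := fun s => be1 s / bm2 s with hGdef
  set H : ℝ → ℝ := fun s => bm1 s / be2 s with hHdef
  have hGpos : ∀ s ∈ Ioo (0:ℝ) 1, 0 < G s := fun s hs =>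
    div_pos (hbe1pos s hs) (hbm2pos s hs)
  have hHpos : ∀ s ∈ Ioo (0:ℝ) 1, 0 < H s := fun s hs =>
    div_pos (hbm1pos s hs) (hbe2pos s hs)
  have hGmono : MonotoneOn G (Ioo (0:ℝ) 1) := by
    intro x hx y hy hxy
    exact div_le_div₀ (hbe1pos y hy).le (hbe1mono hx hy hxy) (hbm2pos y hy) (hbm2anti hx hy hxy)
  have hHanti : AntitoneOn H (Ioo (0:ℝ) 1) := by
    intro x hx y hy hxy
    exact div_le_div₀ (hbm1pos x hx).le (hbm1anti hx hy hxy) (hbe2pos x hx) (hbe2mono hx hy hxy)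
  -- equivalence of s^(2ε) ψ with G, and s^(-2ε) ψ with H
  have hGequiv : ∀ s ∈ Ioo (0:ℝ) 1,
      (c1/D2) * G s ≤ s ^ (2*ε) * (b1 s / b2 s) ∧
      s ^ (2*ε) * (b1 s / b2 s) ≤ (C1/d2) * G s := by
    intro s hs
    have hs0 := hs.1
    have hsε : (0:ℝ) < s ^ ε := Real.rpow_pos_of_pos hs0 ε
    have hsnε : (0:ℝ) < s ^ (-ε) := Real.rpow_pos_of_pos hs0 (-ε)
    have key : s ^ (2*ε) * (b1 s / b2 s) = (s ^ ε * b1 s) / (s ^ (-ε) * b2 s) := by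
      rw [Real.rpow_neg hs0.le, two_mul, Real.rpow_add hs0]
      field_simp
    have he1 := hbe1 s hs; simp only at he1
    have hm2 := hbm2 s hs; simp only at hm2
    constructor
    · rw [key, hGdef]
      have : (c1/D2) * (be1 s / bm2 s) = (c1 * be1 s) / (D2 * bm2 s) := by
        rw [mul_div_mul_comm]
      rw [this]
      exact div_le_div₀ (mul_pos hsε (hb1pos s hs)).le he1.1
        (mul_pos hsnε (hb2pos s hs)) hm2.2
    · rw [key, hGdef]
      have : (C1/d2) * (be1 s / bm2 s) = (C1 * be1 s) / (d2 * bm2 s) := by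
        rw [mul_div_mul_comm]
      rw [this]
      exact div_le_div₀ (mul_pos hC1 (hbe1pos s hs)).le he1.2
        (mul_pos hd2 (hbm2pos s hs)) hm2.1
  have hHequiv : ∀ s ∈ Ioo (0:ℝ) 1,
      (d1/C2) * H s ≤ s ^ (-(2*ε)) * (b1 s / b2 s) ∧
      s ^ (-(2*ε)) * (b1 s / b2 s) ≤ (D1/c2) * H s := by
    intro s hs
    have hs0 := hs.1
    have hsε : (0:ℝ) < s ^ ε := Real.rpow_pos_of_pos hs0 ε
    have hsnε : (0:ℝ) < s ^ (-ε) := Real.rpow_pos_of_pos hs0 (-ε)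
    have key : s ^ (-(2*ε)) * (b1 s / b2 s) = (s ^ (-ε) * b1 s) / (s ^ ε * b2 s) := by
      rw [show -(2*ε) = -ε + -ε by ring, Real.rpow_add hs0, Real.rpow_neg hs0.le]
      field_simp
    have hm1 := hbm1 s hs; simp only at hm1
    have he2 := hbe2 s hs; simp only at he2
    constructor
    · rw [key, hHdef]
      have : (d1/C2) * (bm1 s / be2 s) = (d1 * bm1 s) / (C2 * be2 s) := by
        rw [mul_div_mul_comm]
      rw [this]
      exact div_le_div₀ (mul_pos hsnε (hb1pos s hs)).le hm1.1
        (mul_pos hsε (hb2pos s hs)) he2.2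
    · rw [key, hHdef]
      have : (D1/c2) * (bm1 s / be2 s) = (D1 * bm1 s) / (c2 * be2 s) := by
        rw [mul_div_mul_comm]
      rw [this]
      exact div_le_div₀ (mul_pos hD1 (hbm1pos s hs)).le hm1.2
        (mul_pos hc2 (hbe2pos s hs)) he2.1
  have hεp : 2 * ε * p = 1/2 := by
    rw [hεdef]; field_simp; ring
  set Kc : ℝ := (C1/d2) * (D2/c1) with hKcdef
  set kc : ℝ := (d1/C2) * (c2/D1) with hkcdef
  have hKcpos : 0 < Kc := mul_pos (div_pos hC1 hd2) (div_pos hD2 hc1)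
  have hkcpos : 0 < kc := mul_pos (div_pos hd1 hC2) (div_pos hc2 hD1)
  -- main integral bound
  have hbound : ∀ u ∈ Ioo (0:ℝ) 1,
      (2/3) * kc ^ p * (u * (b1 u / b2 u) ^ p) ≤ (∫ s in Ioo (0:ℝ) u, (b1 s / b2 s) ^ p) ∧
      (∫ s in Ioo (0:ℝ) u, (b1 s / b2 s) ^ p) ≤ 2 * Kc ^ p * (u * (b1 u / b2 u) ^ p) := by
    intro u hu
    have hu0 := hu.1
    have hsub : Ioo (0:ℝ) u ⊆ Ioo (0:ℝ) 1 := Ioo_subset_Ioo_right hu.2.le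
    have hψint_u : IntegrableOn (fun s => (b1 s / b2 s) ^ p) (Ioo (0:ℝ) u) volume :=
      hψint.mono_set hsub
    have huhalf : (0:ℝ) < u ^ ((1:ℝ)/2) := Real.rpow_pos_of_pos hu0 _
    have huu : u ^ ((1:ℝ)/2) * u ^ ((1:ℝ)/2) = u := by
      rw [← Real.rpow_add hu0]; norm_num
    set Mu : ℝ := (C1/d2) * G u with hMu
    set mu : ℝ := (d1/C2) * H u with hmu
    have hMupos : 0 < Mu := mul_pos (div_pos hC1 hd2) (hGpos u hu)
    have hmupos : 0 < mu := mul_pos (div_pos hd1 hC2) (hHpos u hu)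
    constructor
    · -- lower bound
      have hptge : ∀ s ∈ Ioo (0:ℝ) u, mu ^ p * s ^ ((1:ℝ)/2) ≤ (b1 s / b2 s) ^ p := by
        intro s hs
        have hs1 : s ∈ Ioo (0:ℝ) 1 := hsub hs
        have hs0 := hs1.1
        have h1' : mu ≤ s ^ (-(2*ε)) * (b1 s / b2 s) := by
          refine le_trans ?_ (hHequiv s hs1).1
          have := hHanti hs1 hu hs.2.le
          nlinarith [div_pos hd1 hC2]
        have hψs : s ^ (2*ε) * mu ≤ b1 s / b2 s := by
          have hpow : (0:ℝ) < s ^ (2*ε) := Real.rpow_pos_of_pos hs0 _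
          have h2 := mul_le_mul_of_nonneg_left h1' hpow.le
          calc s ^ (2*ε) * mu ≤ s ^ (2*ε) * (s ^ (-(2*ε)) * (b1 s / b2 s)) := h2
            _ = b1 s / b2 s := by
                rw [← mul_assoc, ← Real.rpow_add hs0]
                norm_num
        calc mu ^ p * s ^ ((1:ℝ)/2) = (s ^ (2*ε) * mu) ^ p := by
              rw [Real.mul_rpow (Real.rpow_nonneg hs0.le _) hmupos.le,
                ← Real.rpow_mul hs0.le, hεp]
              ring
          _ ≤ (b1 s / b2 s) ^ p :=
              Real.rpow_le_rpow (by positivity) hψs hp.le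
      have hlint : IntegrableOn (fun s : ℝ => mu ^ p * s ^ ((1:ℝ)/2)) (Ioo (0:ℝ) u) volume := by
        have h := intervalIntegral.intervalIntegrable_rpow'
          (show (-1:ℝ) < (1:ℝ)/2 by norm_num) (a := 0) (b := u)
        exact ((intervalIntegrable_iff_integrableOn_Ioo_of_le hu0.le).mp h).const_mul _
      have hmono := setIntegral_mono_on hlint hψint_u measurableSet_Ioo hptge
      have hval : ∫ s in Ioo (0:ℝ) u, mu ^ p * s ^ ((1:ℝ)/2) = mu ^ p * ((2/3) * u ^ ((3:ℝ)/2)) := by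
        rw [integral_const_mul]
        congr 1
        rw [← integral_Ioc_eq_integral_Ioo, ← intervalIntegral.integral_of_le hu0.le,
          integral_rpow (Or.inl (by norm_num))]
        rw [Real.zero_rpow (by norm_num)]
        norm_num
        ring_nf
      have hmub : kc ^ p * (u ^ (-(1:ℝ)/2) * (b1 u / b2 u) ^ p) ≤ mu ^ p := by
        have h := (hHequiv u hu).2
        have hHu : (c2/D1) * (u ^ (-(2*ε)) * (b1 u / b2 u)) ≤ H u := by
          have h2 := mul_le_mul_of_nonneg_left h (div_pos hc2 hD1).le
          calc (c2/D1) * (u ^ (-(2*ε)) * (b1 u / b2 u)) ≤ (c2/D1) * ((D1/c2) * H u) := h2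
            _ = H u := by field_simp
        have hmuge : kc * (u ^ (-(2*ε)) * (b1 u / b2 u)) ≤ mu := by
          rw [hkcdef, hmu]
          calc (d1/C2) * (c2/D1) * (u ^ (-(2*ε)) * (b1 u / b2 u))
              = (d1/C2) * ((c2/D1) * (u ^ (-(2*ε)) * (b1 u / b2 u))) := by ring
            _ ≤ (d1/C2) * H u := by
                exact mul_le_mul_of_nonneg_left hHu (div_pos hd1 hC2).le
        calc kc ^ p * (u ^ (-(1:ℝ)/2) * (b1 u / b2 u) ^ p)
            = (kc * (u ^ (-(2*ε)) * (b1 u / b2 u))) ^ p := by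
              rw [Real.mul_rpow hkcpos.le
                  (mul_nonneg (Real.rpow_nonneg hu0.le _) (hψpos u hu).le),
                Real.mul_rpow (Real.rpow_nonneg hu0.le _) (hψpos u hu).le,
                ← Real.rpow_mul hu0.le, show -(2*ε) * p = -(1:ℝ)/2 by
                  rw [hεdef]; field_simp; ring]
          _ ≤ mu ^ p := Real.rpow_le_rpow
              (mul_nonneg hkcpos.le (mul_nonneg (Real.rpow_nonneg hu0.le _) (hψpos u hu).le))
              hmuge hp.le
      have huexp : u ^ ((3:ℝ)/2) * u ^ (-(1:ℝ)/2) = u := by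
        rw [← Real.rpow_add hu0]; norm_num
      calc (2/3) * kc ^ p * (u * (b1 u / b2 u) ^ p)
          = (kc ^ p * (u ^ (-(1:ℝ)/2) * (b1 u / b2 u) ^ p)) * ((2/3) * u ^ ((3:ℝ)/2)) := by
            linear_combination (-(2/3) * kc ^ p * (b1 u / b2 u) ^ p) * huexp
        _ ≤ mu ^ p * ((2/3) * u ^ ((3:ℝ)/2)) := by
            refine mul_le_mul_of_nonneg_right hmub ?_
            positivity
        _ = ∫ s in Ioo (0:ℝ) u, mu ^ p * s ^ ((1:ℝ)/2) := hval.symm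
        _ ≤ ∫ s in Ioo (0:ℝ) u, (b1 s / b2 s) ^ p := hmono
    · -- upper bound
      have hptle : ∀ s ∈ Ioo (0:ℝ) u, (b1 s / b2 s) ^ p ≤ Mu ^ p * s ^ (-(1:ℝ)/2) := by
        intro s hs
        have hs1 : s ∈ Ioo (0:ℝ) 1 := hsub hs
        have hs0 := hs1.1
        have h1' : s ^ (2*ε) * (b1 s / b2 s) ≤ Mu := by
          refine le_trans (hGequiv s hs1).2 ?_
          have := hGmono hs1 hu hs.2.le
          nlinarith [div_pos hC1 hd2]
        have hψs : b1 s / b2 s ≤ s ^ (-(2*ε)) * Mu := by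
          have hpow : (0:ℝ) < s ^ (-(2*ε)) := Real.rpow_pos_of_pos hs0 _
          have h2 := mul_le_mul_of_nonneg_left h1' hpow.le
          calc b1 s / b2 s = s ^ (-(2*ε)) * (s ^ (2*ε) * (b1 s / b2 s)) := by
                rw [← mul_assoc, ← Real.rpow_add hs0]
                norm_num
            _ ≤ s ^ (-(2*ε)) * Mu := h2
        calc (b1 s / b2 s) ^ p ≤ (s ^ (-(2*ε)) * Mu) ^ p :=
              Real.rpow_le_rpow (hψpos s hs1).le hψs hp.le
          _ = Mu ^ p * s ^ (-(1:ℝ)/2) := by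
              rw [Real.mul_rpow (Real.rpow_nonneg hs0.le _) hMupos.le,
                ← Real.rpow_mul hs0.le, show -(2*ε) * p = -(1:ℝ)/2 by
                  rw [hεdef]; field_simp; ring]
              ring
      have hrint : IntegrableOn (fun s : ℝ => Mu ^ p * s ^ (-(1:ℝ)/2)) (Ioo (0:ℝ) u) volume := by
        have h := intervalIntegral.intervalIntegrable_rpow'
          (show (-1:ℝ) < -(1:ℝ)/2 by norm_num) (a := 0) (b := u)
        exact ((intervalIntegrable_iff_integrableOn_Ioo_of_le hu0.le).mp h).const_mul _
      have hmono := setIntegral_mono_on hψint_u hrint measurableSet_Ioo hptle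
      have hval : ∫ s in Ioo (0:ℝ) u, Mu ^ p * s ^ (-(1:ℝ)/2) = Mu ^ p * (2 * u ^ ((1:ℝ)/2)) := by
        rw [integral_const_mul]
        congr 1
        rw [← integral_Ioc_eq_integral_Ioo, ← intervalIntegral.integral_of_le hu0.le,
          integral_rpow (Or.inl (by norm_num))]
        rw [Real.zero_rpow (by norm_num)]
        norm_num
        ring_nf
      have hMub : Mu ^ p ≤ Kc ^ p * (u ^ ((1:ℝ)/2) * (b1 u / b2 u) ^ p) := by
        have h := (hGequiv u hu).1
        have hGu : G u ≤ (D2/c1) * (u ^ (2*ε) * (b1 u / b2 u)) := by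
          have h2 := mul_le_mul_of_nonneg_left h (div_pos hD2 hc1).le
          calc G u = (D2/c1) * ((c1/D2) * G u) := by field_simp
            _ ≤ (D2/c1) * (u ^ (2*ε) * (b1 u / b2 u)) := h2
        have hMule : Mu ≤ Kc * (u ^ (2*ε) * (b1 u / b2 u)) := by
          rw [hMu, hKcdef]
          calc (C1/d2) * G u ≤ (C1/d2) * ((D2/c1) * (u ^ (2*ε) * (b1 u / b2 u))) :=
                mul_le_mul_of_nonneg_left hGu (div_pos hC1 hd2).le
            _ = (C1/d2) * (D2/c1) * (u ^ (2*ε) * (b1 u / b2 u)) := by ring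
        calc Mu ^ p ≤ (Kc * (u ^ (2*ε) * (b1 u / b2 u))) ^ p :=
              Real.rpow_le_rpow hMupos.le hMule hp.le
          _ = Kc ^ p * (u ^ ((1:ℝ)/2) * (b1 u / b2 u) ^ p) := by
              rw [Real.mul_rpow hKcpos.le
                  (mul_nonneg (Real.rpow_nonneg hu0.le _) (hψpos u hu).le),
                Real.mul_rpow (Real.rpow_nonneg hu0.le _) (hψpos u hu).le,
                ← Real.rpow_mul hu0.le, hεp]
      calc (∫ s in Ioo (0:ℝ) u, (b1 s / b2 s) ^ p)
          ≤ ∫ s in Ioo (0:ℝ) u, Mu ^ p * s ^ (-(1:ℝ)/2) := hmono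
        _ = Mu ^ p * (2 * u ^ ((1:ℝ)/2)) := hval
        _ ≤ Kc ^ p * (u ^ ((1:ℝ)/2) * (b1 u / b2 u) ^ p) * (2 * u ^ ((1:ℝ)/2)) := by
            refine mul_le_mul_of_nonneg_right hMub ?_
            positivity
        _ = 2 * Kc ^ p * (u * (b1 u / b2 u) ^ p) := by
            linear_combination (2 * Kc ^ p * (b1 u / b2 u) ^ p) * huu
  -- assemble
  set k : ℝ := (2/3) * kc ^ p with hk
  set K : ℝ := 2 * Kc ^ p with hK
  have hkpos : 0 < k := by
    rw [hk]; positivity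
  have hKpos : 0 < K := by
    rw [hK]; positivity
  have hAipos : 0 < A⁻¹ := inv_pos.2 hApos
  refine ⟨(A⁻¹ * k) ^ ((1:ℝ)/p), (A⁻¹ * K) ^ ((1:ℝ)/p),
    Real.rpow_pos_of_pos (by positivity) _, Real.rpow_pos_of_pos (by positivity) _, ?_⟩
  intro t ht
  have ht0 := ht.1
  have hu : t ^ p ∈ Ioo (0:ℝ) 1 :=
    ⟨Real.rpow_pos_of_pos ht0 p, Real.rpow_lt_one ht0.le ht.2 hp⟩
  have htIcc : t ∈ Icc (0:ℝ) 1 := ⟨ht0.le, ht.2.le⟩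
  have hσit : σi t ∈ Icc (0:ℝ) 1 := hσimap htIcc
  have hσσi : σ (σi t) = t := (hσinv t htIcc).1
  have hEq : (σi t) ^ p = A⁻¹ * ∫ s in Ioo (0:ℝ) (t ^ p), (b1 s / b2 s) ^ p := by
    have h := heq (σi t) hσit
    rwa [hσσi] at h
  obtain ⟨hlow, hupp⟩ := hbound (t ^ p) hu
  have hXpos : 0 < t * (b1 (t ^ p) / b2 (t ^ p)) := mul_pos ht0 (hψpos _ hu)
  have hXp : (t * (b1 (t ^ p) / b2 (t ^ p))) ^ p = t ^ p * (b1 (t ^ p) / b2 (t ^ p)) ^ p :=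
    Real.mul_rpow ht0.le (hψpos _ hu).le
  have hcl : ∀ a : ℝ, 0 < a → (a ^ ((1:ℝ)/p) * (t * (b1 (t ^ p) / b2 (t ^ p)))) ^ p
      = a * (t ^ p * (b1 (t ^ p) / b2 (t ^ p)) ^ p) := by
    intro a ha
    rw [Real.mul_rpow (Real.rpow_nonneg ha.le _) hXpos.le,
      ← Real.rpow_mul ha.le, one_div, inv_mul_cancel₀ hp.ne', Real.rpow_one, hXp]
  have hup2 : (σi t) ^ p ≤ ((A⁻¹ * K) ^ ((1:ℝ)/p) * (t * (b1 (t ^ p) / b2 (t ^ p)))) ^ p := by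
    rw [hEq, hcl _ (by positivity)]
    calc A⁻¹ * ∫ s in Ioo (0:ℝ) (t ^ p), (b1 s / b2 s) ^ p
        ≤ A⁻¹ * (K * (t ^ p * (b1 (t ^ p) / b2 (t ^ p)) ^ p)) :=
          mul_le_mul_of_nonneg_left hupp hAipos.le
      _ = A⁻¹ * K * (t ^ p * (b1 (t ^ p) / b2 (t ^ p)) ^ p) := by ring
  have hlow2 : ((A⁻¹ * k) ^ ((1:ℝ)/p) * (t * (b1 (t ^ p) / b2 (t ^ p)))) ^ p ≤ (σi t) ^ p := by
    rw [hEq, hcl _ (by positivity)]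
    calc A⁻¹ * k * (t ^ p * (b1 (t ^ p) / b2 (t ^ p)) ^ p)
        = A⁻¹ * (k * (t ^ p * (b1 (t ^ p) / b2 (t ^ p)) ^ p)) := by ring
      _ ≤ A⁻¹ * ∫ s in Ioo (0:ℝ) (t ^ p), (b1 s / b2 s) ^ p :=
          mul_le_mul_of_nonneg_left hlow hAipos.le
  constructor
  · rw [mul_div_assoc]
    by_contra hcon
    push_neg at hcon
    have h2 := Real.rpow_lt_rpow hσit.1 hcon hp
    linarith
  · rw [mul_div_assoc]
    by_contra hcon
    push_neg at hcon
    have h2 := Real.rpow_lt_rpow (by positivity) hcon hp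
    linarith
end

section
/- Let p ∈ (0,∞) and let b_1, b_2 be slowly varying functions on (0,1) such that t ↦ b_1(t)^p b_2(t)^{-p} is nonincreasing. Let σ be the increasing bijection of [0,1] with t^p = (1/C) ∫_0^{σ(t)^p} [b_1(s)/b_2(s)]^p ds, C = ∫_0^1 [b_1(s)/b_2(s)]^p ds. Then t ≤ σ^{-1}(t^{1/p})^p for every t ∈ (0,1). Moreover, if t ↦ b_1(t)^p b_2(t)^{-p} is strictly decreasing, the inequality is strict. -/
open MeasureTheory Set ENNReal Filter Topology

theorem stmt_5 (p : ℝ) (hp : 0 < p) (b1 b2 σ σi : ℝ → ℝ)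
    (h1 : SlowlyVarying b1) (h2 : SlowlyVarying b2)
    (hmon : AntitoneOn (fun t => b1 t ^ p / b2 t ^ p) (Ioo (0:ℝ) 1))
    (hσ : IsSigma p b1 b2 σ) (hσi : IsSigmaInv σ σi) :
    (∀ t ∈ Ioo (0:ℝ) 1, t ≤ (σi (t ^ (1/p))) ^ p) ∧
    (StrictAntiOn (fun t => b1 t ^ p / b2 t ^ p) (Ioo (0:ℝ) 1) →
      ∀ t ∈ Ioo (0:ℝ) 1, t < (σi (t ^ (1/p))) ^ p) := by
  obtain ⟨hb1m, hb1pos, -⟩ := h1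
  obtain ⟨hb2m, hb2pos, -⟩ := h2
  obtain ⟨-, -, -, -, hint, hCpos, heq⟩ := hσ
  obtain ⟨hmaps, hinv⟩ := hσi
  set φ : ℝ → ℝ := fun s => (b1 s / b2 s) ^ p with hφ
  set C : ℝ := ∫ s in Ioo (0:ℝ) 1, φ s with hC
  have hφψ : ∀ s ∈ Ioo (0:ℝ) 1, φ s = b1 s ^ p / b2 s ^ p := fun s hs =>
    Real.div_rpow (hb1pos s hs).le (hb2pos s hs).le p
  have hφanti : ∀ x y, x ∈ Ioo (0:ℝ) 1 → y ∈ Ioo (0:ℝ) 1 → x ≤ y → φ y ≤ φ x := by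
    intro x y hx hy hxy
    rw [hφψ x hx, hφψ y hy]; exact hmon hx hy hxy
  have hφnn : ∀ s ∈ Ioo (0:ℝ) 1, 0 ≤ φ s := by
    intro s hs
    have := hb1pos s hs; have := hb2pos s hs
    exact Real.rpow_nonneg (by positivity) _
  have key : ∀ t ∈ Ioo (0:ℝ) 1,
      (σi (t ^ (1/p))) ^ p = C⁻¹ * ∫ s in Ioo (0:ℝ) t, φ s := by
    intro t ht
    have humem : t ^ (1/p) ∈ Icc (0:ℝ) 1 :=
      ⟨Real.rpow_nonneg ht.1.le _, Real.rpow_le_one ht.1.le ht.2.le (by positivity)⟩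
    have hsi : σ (σi (t ^ (1/p))) = t ^ (1/p) := (hinv _ humem).1
    have hmem : σi (t ^ (1/p)) ∈ Icc (0:ℝ) 1 := hmaps humem
    have hup : (t ^ (1/p)) ^ p = t := by
      rw [← Real.rpow_mul ht.1.le, one_div_mul_cancel hp.ne', Real.rpow_one]
    have := heq _ hmem
    rw [hsi, hup] at this
    exact this
  -- main estimates for fixed t ∈ (0,1)
  have main : ∀ t ∈ Ioo (0:ℝ) 1,
      (t * C ≤ ∫ s in Ioo (0:ℝ) t, φ s) ∧
      ((∀ x ∈ Ioo (0:ℝ) t, φ t < φ x) → t * C < ∫ s in Ioo (0:ℝ) t, φ s) := by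
    intro t ht
    have hsub1 : Ioo (0:ℝ) t ⊆ Ioo (0:ℝ) 1 := Ioo_subset_Ioo le_rfl ht.2.le
    have hsub2 : Ico t (1:ℝ) ⊆ Ioo (0:ℝ) 1 := fun x hx => ⟨lt_of_lt_of_le ht.1 hx.1, hx.2⟩
    have hi1 : IntegrableOn φ (Ioo (0:ℝ) t) := hint.mono_set hsub1
    have hi2 : IntegrableOn φ (Ico t (1:ℝ)) := hint.mono_set hsub2
    have hsplit : C = (∫ s in Ioo (0:ℝ) t, φ s) + ∫ s in Ico t (1:ℝ), φ s := by
      rw [hC, ← Ioo_union_Ico_eq_Ioo ht.1 ht.2.le,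
        setIntegral_union (Set.disjoint_left.2 fun x hx1 hx2 => absurd hx1.2 (not_lt.2 hx2.1)) measurableSet_Ico hi1 hi2]
    have hic : IntegrableOn (fun _ => φ t) (Ioo (0:ℝ) t) := integrableOn_const (by
      rw [Real.volume_Ioo]; exact ENNReal.ofReal_ne_top)
    have hic2 : IntegrableOn (fun _ => φ t) (Ico t (1:ℝ)) := integrableOn_const (by
      rw [Real.volume_Ico]; exact ENNReal.ofReal_ne_top)
    have hconst1 : (∫ _ in Ioo (0:ℝ) t, φ t) = t * φ t := by
      rw [setIntegral_const, measureReal_def, Real.volume_Ioo, smul_eq_mul,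
        ENNReal.toReal_ofReal (by linarith [ht.1])]
      try ring
    have hconst2 : (∫ _ in Ico t (1:ℝ), φ t) = (1 - t) * φ t := by
      rw [setIntegral_const, measureReal_def, Real.volume_Ico, smul_eq_mul,
        ENNReal.toReal_ofReal (by linarith [ht.2])]
      try ring
    have hA : t * φ t ≤ ∫ s in Ioo (0:ℝ) t, φ s := by
      rw [← hconst1]
      exact setIntegral_mono_on hic hi1 measurableSet_Ioo
        (fun x hx => hφanti x t (hsub1 hx) ht hx.2.le)
    have hB : (∫ s in Ico t (1:ℝ), φ s) ≤ (1 - t) * φ t := by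
      rw [← hconst2]
      exact setIntegral_mono_on hi2 hic2 measurableSet_Ico
        (fun x hx => hφanti t x ht (hsub2 hx) hx.1)
    have hφt : 0 ≤ φ t := hφnn t ht
    constructor
    · nlinarith [ht.1, ht.2]
    · intro hstrict
      have hA' : t * φ t < ∫ s in Ioo (0:ℝ) t, φ s := by
        have hpos : 0 < ∫ x in Ioo (0:ℝ) t, (φ x - φ t) := by
          rw [setIntegral_pos_iff_support_of_nonneg_ae]
          · have hss : Ioo (0:ℝ) t ⊆ Function.support (fun x => φ x - φ t) := by
              intro x hx
              exact sub_ne_zero.2 (ne_of_gt (hstrict x hx))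
            rw [Set.inter_eq_right.2 hss, Real.volume_Ioo]
            exact ENNReal.ofReal_pos.2 (by linarith [ht.1])
          · refine (ae_restrict_iff' measurableSet_Ioo).2 (Filter.Eventually.of_forall ?_)
            intro x hx
            exact sub_nonneg.2 (hstrict x hx).le
          · exact hi1.sub hic
        have := integral_sub hi1 hic
        rw [hconst1] at this
        rw [this] at hpos
        linarith
      nlinarith [ht.1, ht.2]
  have hCinv : ∀ t ∈ Ioo (0:ℝ) 1, ∀ r : ℝ, (t ≤ C⁻¹ * r ↔ C * t ≤ r) ∧ (t < C⁻¹ * r ↔ C * t < r) := by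
    intro t ht r
    constructor
    · exact le_inv_mul_iff₀ hCpos
    · exact lt_inv_mul_iff₀ hCpos
  constructor
  · intro t ht
    rw [key t ht, (hCinv t ht _).1, mul_comm]
    exact (main t ht).1
  · intro hstrict t ht
    rw [key t ht, (hCinv t ht _).2, mul_comm]
    refine (main t ht).2 ?_
    intro x hx
    rw [hφψ t ht, hφψ x (Ioo_subset_Ioo le_rfl ht.2.le hx)]
    exact hstrict (Ioo_subset_Ioo le_rfl ht.2.le hx) ht hx.2
end

section
/- Let p ∈ (0,∞), let b_1, b_2 be continuous slowly varying functions on (0,1) with b_2 nondecreasing, and let σ be the associated increasing bijection of [0,1] satisfying t^p = (1/C)∫_0^{σ(t)^p}[b_1(s)/b_2(s)]^p ds with C = ∫_0^1[b_1(s)/b_2(s)]^p ds. Then for every g ∈ L^{p,b_1}(S,ν) and every t ∈ (0,1), K(g, t; L^{p,b_1}, L^{∞,b_2}) ≈ (∫_0^{σ(t)^p} [g*(s) b_1(s)]^p ds)^{1/p} + t · sup_{σ(t)^p ≤ s < 1} g*(s) b_2(s), with multiplicative constants independent of g and t. -/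
open MeasureTheory Set ENNReal Filter Topology

noncomputable section

section rearrBasic
variable {α : Type*} [MeasurableSpace α] (μ : Measure α) (f g : α → ℝ)

lemma rearr_anti {t1 t2 : ℝ} (h : t1 ≤ t2) : rearr μ f t2 ≤ rearr μ f t1 :=
  sInf_le_sInf (fun lam hl => le_trans hl (ENNReal.ofReal_le_ofReal h))

lemma rearr_anti' : Antitone (rearr μ f) := fun _ _ h => rearr_anti μ f h

lemma rearr_mono_abs (h : ∀ x, |f x| ≤ |g x|) (t : ℝ) : rearr μ f t ≤ rearr μ g t := by
  refine sInf_le_sInf (fun lam hl => ?_)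
  refine le_trans (measure_mono (fun x hx => ?_)) hl
  exact lt_of_lt_of_le hx (ENNReal.ofReal_le_ofReal (h x))

lemma rearr_le_of_mem {lam : ℝ≥0∞} {t : ℝ}
    (h : μ {x | lam < ENNReal.ofReal |f x|} ≤ ENNReal.ofReal t) : rearr μ f t ≤ lam :=
  sInf_le h

/-- there is a finite element slightly above the infimum -/
lemma rearr_exists_near {t : ℝ} (hfin : rearr μ f t ≠ ⊤) {ε : ℝ≥0∞} (hε : 0 < ε) :
    ∃ lam : ℝ≥0∞, lam ≠ ⊤ ∧ lam ≤ rearr μ f t + ε ∧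
      μ {x | lam < ENNReal.ofReal |f x|} ≤ ENNReal.ofReal t := by
  have hlt : rearr μ f t < rearr μ f t + ε := by
    exact ENNReal.lt_add_right hfin hε.ne'
  obtain ⟨lam, hmem, hlam⟩ := sInf_lt_iff.mp (lt_of_eq_of_lt rfl hlt)
  exact ⟨lam, (lt_of_lt_of_le hlam le_top).ne, hlam.le, hmem⟩

/-- subadditivity of the rearrangement -/
lemma rearr_subadd (t1 t2 : ℝ) (ht1 : 0 ≤ t1) (ht2 : 0 ≤ t2) (x : α → ℝ) (hx : f = g + x) :
    rearr μ f (t1 + t2) ≤ rearr μ g t1 + rearr μ x t2 := by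
  have key : ∀ a ∈ {lam : ℝ≥0∞ | μ {y | lam < ENNReal.ofReal |g y|} ≤ ENNReal.ofReal t1},
      ∀ b ∈ {lam : ℝ≥0∞ | μ {y | lam < ENNReal.ofReal |x y|} ≤ ENNReal.ofReal t2},
      rearr μ f (t1 + t2) ≤ a + b := by
    intro a ha b hb
    refine rearr_le_of_mem μ f ?_
    have hsub : {y | a + b < ENNReal.ofReal |f y|} ⊆
        {y | a < ENNReal.ofReal |g y|} ∪ {y | b < ENNReal.ofReal |x y|} := by
      intro y hy
      by_contra hcon
      simp only [mem_setOf_eq, mem_union, not_or, not_lt] at hcon hy ⊢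
      have h1 : ENNReal.ofReal |f y| ≤ ENNReal.ofReal |g y| + ENNReal.ofReal |x y| := by
        rw [← ENNReal.ofReal_add (abs_nonneg _) (abs_nonneg _)]
        refine ENNReal.ofReal_le_ofReal ?_
        rw [hx]; exact abs_add_le _ _
      exact absurd (lt_of_lt_of_le hy h1)
        (not_lt.mpr (add_le_add hcon.1 hcon.2))
    calc μ {y | a + b < ENNReal.ofReal |f y|} ≤ μ ({y | a < ENNReal.ofReal |g y|} ∪
          {y | b < ENNReal.ofReal |x y|}) := measure_mono hsub
      _ ≤ μ {y | a < ENNReal.ofReal |g y|} + μ {y | b < ENNReal.ofReal |x y|} :=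
          measure_union_le _ _
      _ ≤ ENNReal.ofReal t1 + ENNReal.ofReal t2 := add_le_add ha hb
      _ = ENNReal.ofReal (t1 + t2) := (ENNReal.ofReal_add ht1 ht2).symm
  rw [rearr, rearr, ENNReal.sInf_add]
  refine le_iInf₂ fun a ha => ?_
  have h2 : a + rearr μ x t2 = ⨅ b ∈ {lam : ℝ≥0∞ |
      μ {y | lam < ENNReal.ofReal |x y|} ≤ ENNReal.ofReal t2}, b + a := by
    rw [add_comm, rearr, ENNReal.sInf_add]
  rw [h2]
  refine le_iInf₂ fun b hb => le_trans (key a ha b hb) (by rw [add_comm])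

lemma rearr_measurable : Measurable (rearr μ f) := (rearr_anti' μ f).measurable

end rearrBasic

lemma sv_compare {b : ℝ → ℝ} (hb : SlowlyVarying b) {ε : ℝ} (hε : 0 < ε) :
    ∃ D : ℝ, 1 ≤ D ∧ ∀ u s : ℝ, 0 < u → u ≤ s → s < 1 →
      b s ≤ D * (s/u) ^ ε * b u ∧ b u ≤ D * (s/u) ^ ε * b s := by
  obtain ⟨hmeas, hpos, hsv⟩ := hb
  obtain ⟨⟨be, hbe_mono, c1, C1, hc1, hC1, hbe⟩, ⟨bm, hbm_anti, c2, C2, hc2, hC2, hbm⟩⟩ :=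
    hsv ε hε
  refine ⟨max 1 (max (C2/c2) (C1/c1)), le_max_left _ _, fun u s hu hus hs1 => ?_⟩
  set D := max 1 (max (C2/c2) (C1/c1)) with hD
  have hu1 : u ∈ Ioo (0:ℝ) 1 := ⟨hu, lt_of_le_of_lt hus hs1⟩
  have hs : s ∈ Ioo (0:ℝ) 1 := ⟨lt_of_lt_of_le hu hus, hs1⟩
  have hbu := hpos u hu1
  have hbs := hpos s hs
  have hsε : (0:ℝ) < s ^ ε := Real.rpow_pos_of_pos hs.1 ε
  have huε : (0:ℝ) < u ^ ε := Real.rpow_pos_of_pos hu ε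
  have hsnε : (0:ℝ) < s ^ (-ε) := Real.rpow_pos_of_pos hs.1 (-ε)
  have hunε : (0:ℝ) < u ^ (-ε) := Real.rpow_pos_of_pos hu (-ε)
  have hquot : (s/u) ^ ε = s ^ ε * u ^ (-ε) := by
    rw [Real.div_rpow hs.1.le hu.le, Real.rpow_neg hu.le, div_eq_mul_inv]
  have hqpos : (0:ℝ) < (s/u) ^ ε := Real.rpow_pos_of_pos (div_pos hs.1 hu) ε
  have hDm : C2/c2 ≤ D := le_trans (le_max_left _ _) (le_max_right _ _)
  have hDe : C1/c1 ≤ D := le_trans (le_max_right _ _) (le_max_right _ _)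
  constructor
  · -- b s ≤ D * (s/u)^ε * b u
    have h1 : s ^ (-ε) * b s ≤ C2 * bm s := (hbm s hs).2
    have h2 : bm s ≤ bm u := hbm_anti hu1 hs hus
    have h3 : c2 * bm u ≤ u ^ (-ε) * b u := (hbm u hu1).1
    have hX : s ^ (-ε) * b s ≤ (C2/c2) * (u ^ (-ε) * b u) := by
      rw [div_mul_eq_mul_div, le_div_iff₀ hc2]
      have hA : s ^ (-ε) * b s ≤ C2 * bm u :=
        h1.trans (mul_le_mul_of_nonneg_left h2 hC2.le)
      have hB := mul_le_mul_of_nonneg_left h3 hC2.le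
      have hC := mul_le_mul_of_nonneg_right hA hc2.le
      nlinarith [hB, hC]
    have hbs_eq : b s = s ^ ε * (s ^ (-ε) * b s) := by
      rw [← mul_assoc, ← Real.rpow_add hs.1]
      simp
    calc b s = s ^ ε * (s ^ (-ε) * b s) := hbs_eq
      _ ≤ s ^ ε * ((C2/c2) * (u ^ (-ε) * b u)) := mul_le_mul_of_nonneg_left hX hsε.le
      _ = (C2/c2) * ((s/u) ^ ε * b u) := by rw [hquot]; ring
      _ ≤ D * ((s/u) ^ ε * b u) :=
          mul_le_mul_of_nonneg_right hDm (by positivity)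
      _ = D * (s/u) ^ ε * b u := by ring
  · -- b u ≤ D * (s/u)^ε * b s
    have h1 : u ^ ε * b u ≤ C1 * be u := (hbe u hu1).2
    have h2 : be u ≤ be s := hbe_mono hu1 hs hus
    have h3 : c1 * be s ≤ s ^ ε * b s := (hbe s hs).1
    have hX : u ^ ε * b u ≤ (C1/c1) * (s ^ ε * b s) := by
      rw [div_mul_eq_mul_div, le_div_iff₀ hc1]
      have hA : u ^ ε * b u ≤ C1 * be s :=
        h1.trans (mul_le_mul_of_nonneg_left h2 hC1.le)
      have hB := mul_le_mul_of_nonneg_left h3 hC1.le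
      have hC := mul_le_mul_of_nonneg_right hA hc1.le
      nlinarith [hB, hC]
    have hbu_eq : b u = u ^ (-ε) * (u ^ ε * b u) := by
      rw [← mul_assoc, ← Real.rpow_add hu]
      simp
    calc b u = u ^ (-ε) * (u ^ ε * b u) := hbu_eq
      _ ≤ u ^ (-ε) * ((C1/c1) * (s ^ ε * b s)) := mul_le_mul_of_nonneg_left hX hunε.le
      _ = (C1/c1) * ((s/u) ^ ε * b s) := by rw [hquot]; ring
      _ ≤ D * ((s/u) ^ ε * b s) :=
          mul_le_mul_of_nonneg_right hDe (by positivity)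
      _ = D * (s/u) ^ ε * b s := by ring

lemma sv_doubling {b : ℝ → ℝ} (hb : SlowlyVarying b) :
    ∃ K : ℝ, 1 ≤ K ∧ ∀ s ∈ Ioo (0:ℝ) 1, b s ≤ K * b (s/2) ∧ b (s/2) ≤ K * b s := by
  obtain ⟨D, hD1, hD⟩ := sv_compare hb one_pos
  refine ⟨D * 2, by linarith, fun s hs => ?_⟩
  have h2 : s / (s/2) = 2 := by
    have hs0 : s ≠ 0 := ne_of_gt hs.1
    field_simp
  have := hD (s/2) s (by linarith [hs.1]) (by linarith [hs.1]) hs.2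
  rw [h2, Real.rpow_one] at this
  exact this

lemma lintegral_rpow_Ioo {c : ℝ} (hc : -1 < c) {a : ℝ} (ha : 0 < a) :
    ∫⁻ u in Ioo (0:ℝ) a, ENNReal.ofReal (u ^ c) = ENNReal.ofReal (a ^ (c+1) / (c+1)) := by
  have hc1 : 0 < c + 1 := by linarith
  have hint : IntervalIntegrable (fun x : ℝ => x ^ c) volume 0 a :=
    intervalIntegral.intervalIntegrable_rpow' hc
  have hIoc : IntegrableOn (fun x : ℝ => x ^ c) (Ioc 0 a) volume := by
    rw [← intervalIntegrable_iff_integrableOn_Ioc_of_le ha.le]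
    exact hint
  have hIoo : IntegrableOn (fun x : ℝ => x ^ c) (Ioo 0 a) volume :=
    hIoc.mono_set Ioo_subset_Ioc_self
  have hval : ∫ u in Ioo (0:ℝ) a, u ^ c = a ^ (c+1) / (c+1) := by
    rw [← integral_Ioc_eq_integral_Ioo, ← intervalIntegral.integral_of_le ha.le,
      integral_rpow (Or.inl hc), Real.zero_rpow hc1.ne', sub_zero]
  rw [← ofReal_integral_eq_lintegral_ofReal hIoo ?_, hval]
  · rw [EventuallyLE, ae_restrict_iff' measurableSet_Ioo]
    exact ae_of_all _ fun x hx => Real.rpow_nonneg hx.1.le c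

lemma lintegral_half_Ioo (G : ℝ → ℝ≥0∞) (a : ℝ) :
    ∫⁻ s in Ioo (0:ℝ) a, G (s/2) = 2 * ∫⁻ u in Ioo (0:ℝ) (a/2), G u := by
  set e : ℝ ≃ᵐ ℝ := (Homeomorph.mulLeft₀ (2:ℝ) two_ne_zero).toMeasurableEquiv with he
  have hcoe : ∀ x : ℝ, e x = 2 * x := fun x => rfl
  have hpre : ⇑e ⁻¹' (Ioo (0:ℝ) a) = Ioo (0:ℝ) (a/2) := by
    ext x
    simp only [mem_preimage, hcoe, mem_Ioo]
    constructor <;> rintro ⟨h1, h2⟩ <;> constructor <;> linarith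
  have hmap : Measure.map (⇑e) (volume : Measure ℝ) = ENNReal.ofReal |(2:ℝ)⁻¹| • volume := by
    rw [show ⇑e = (fun x : ℝ => 2 * x) from rfl]
    exact Real.map_volume_mul_left two_ne_zero
  have chain : ENNReal.ofReal |(2:ℝ)⁻¹| * ∫⁻ x in Ioo (0:ℝ) a, G (x/2) =
      ∫⁻ u in Ioo (0:ℝ) (a/2), G u := by
    calc ENNReal.ofReal |(2:ℝ)⁻¹| * ∫⁻ x in Ioo (0:ℝ) a, G (x/2)
        = ∫⁻ x in Ioo (0:ℝ) a, G (x/2) ∂(ENNReal.ofReal |(2:ℝ)⁻¹| • volume) := by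
          rw [Measure.restrict_smul, lintegral_smul_measure, smul_eq_mul]
      _ = ∫⁻ x in Ioo (0:ℝ) a, G (x/2) ∂(Measure.map (⇑e) volume) := by rw [hmap]
      _ = ∫⁻ x, G (x/2) ∂(Measure.map (⇑e) (volume.restrict (Ioo (0:ℝ) (a/2)))) := by
          rw [Measure.restrict_map e.measurable measurableSet_Ioo, hpre]
      _ = ∫⁻ u, G ((e u)/2) ∂(volume.restrict (Ioo (0:ℝ) (a/2))) :=
          lintegral_map_equiv (fun x => G (x/2)) e
      _ = ∫⁻ u in Ioo (0:ℝ) (a/2), G u := by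
          refine lintegral_congr fun u => ?_
          rw [hcoe u]
          norm_num
  rw [← chain, ← mul_assoc]
  have h2 : (2:ℝ≥0∞) * ENNReal.ofReal |(2:ℝ)⁻¹| = 1 := by
    rw [abs_of_nonneg (by norm_num : ((2:ℝ)⁻¹) ≥ 0)]
    rw [ENNReal.ofReal_inv_of_pos two_pos]
    norm_num
    rw [ENNReal.mul_inv_cancel (by norm_num) (by norm_num)]
  rw [h2, one_mul]

lemma clamp_facts {r : ℝ} (hr : 0 ≤ r) (y : ℝ) :
    |max (-r) (min y r)| ≤ |y| ∧ |y - max (-r) (min y r)| ≤ |y| ∧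
      (0 < |y - max (-r) (min y r)| ↔ r < |y|) ∧ |max (-r) (min y r)| ≤ r := by
  rcases lt_or_ge r y with hy | hy
  · have h1 : min y r = r := min_eq_right hy.le
    have h2 : max (-r) r = r := max_eq_right (by linarith)
    rw [h1, h2]
    have hay : |y| = y := abs_of_pos (by linarith)
    have h3 : |y - r| = y - r := abs_of_pos (by linarith)
    rw [hay, h3, abs_of_nonneg hr]
    refine ⟨by linarith, by linarith, ?_, le_refl r⟩
    constructor <;> intro <;> linarith
  · rcases lt_or_ge y (-r) with hy2 | hy2
    · have h1 : min y r = y := min_eq_left (by linarith)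
      have h2 : max (-r) y = -r := max_eq_left (by linarith)
      rw [h1, h2]
      have hay : |y| = -y := abs_of_neg (by linarith)
      have h3 : |y - -r| = -(y + r) := by rw [abs_of_neg (by linarith)]; ring
      rw [hay, h3, abs_neg, abs_of_nonneg hr]
      refine ⟨by linarith, by linarith, ?_, le_refl r⟩
      constructor <;> intro <;> linarith
    · have h1 : min y r = y := min_eq_left hy
      have h2 : max (-r) y = y := max_eq_right hy2
      rw [h1, h2, sub_self, abs_zero]
      have hyr : |y| ≤ r := abs_le.mpr ⟨by linarith, hy⟩
      exact ⟨le_refl _, abs_nonneg y, by constructor <;> intro <;> linarith, hyr⟩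


lemma measurable_ofReal_rpow (c : ℝ) : Measurable fun u : ℝ => ENNReal.ofReal (u ^ c) := by
  have h : Measurable fun u : ℝ => u ^ c := by measurability
  exact h.ennreal_ofReal

lemma ediv_mul_le {c K x y : ℝ≥0∞} (h : c ≤ K * y) : c * (x / y) ≤ K * x := by
  calc c * (x / y) ≤ K * y * (x / y) := mul_le_mul_left h _
    _ = K * (y * (x / y)) := by rw [mul_assoc]
    _ ≤ K * x := mul_le_mul_right ENNReal.mul_div_le _

lemma le_inv_mul_of_mul_le' {x y K : ℝ≥0∞} (h : x * K ≤ y) (hK0 : K ≠ 0) (hKt : K ≠ ⊤) :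
    x ≤ K⁻¹ * y := by
  have hx : x = K⁻¹ * (x * K) := by
    rw [mul_comm x K, ← mul_assoc, ENNReal.inv_mul_cancel hK0 hKt, one_mul]
  rw [hx]
  exact mul_le_mul_right h _

lemma rpow_div_split {s u : ℝ} (hs : 0 < s) (hu : 0 < u) (c : ℝ) :
    (s/u) ^ c = s ^ c * u ^ (-c) := by
  rw [Real.div_rpow hs.le hu.le, Real.rpow_neg hu.le, div_eq_mul_inv]

lemma rpow_comp' {x : ℝ} (hx : 0 ≤ x) {a b c : ℝ} (h : a * b = c) : (x ^ a) ^ b = x ^ c := by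
  rw [← Real.rpow_mul hx, h]

lemma conv_L {p : ℝ} {b1 b2 : ℝ → ℝ}
    (hb1pos : ∀ u ∈ Ioo (0:ℝ) 1, 0 < b1 u) (hb2pos : ∀ u ∈ Ioo (0:ℝ) 1, 0 < b2 u)
    (hint : IntegrableOn (fun s => (b1 s / b2 s) ^ p) (Ioo (0:ℝ) 1))
    {a : ℝ} (ha1 : a ≤ 1) :
    ENNReal.ofReal (∫ s in Ioo (0:ℝ) a, (b1 s / b2 s) ^ p) =
      ∫⁻ s in Ioo (0:ℝ) a, (ENNReal.ofReal (b1 s) / ENNReal.ofReal (b2 s)) ^ p := by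
  have hsub : Ioo (0:ℝ) a ⊆ Ioo (0:ℝ) 1 := fun x hx => ⟨hx.1, lt_of_lt_of_le hx.2 ha1⟩
  rw [ofReal_integral_eq_lintegral_ofReal (hint.mono_set hsub) ?_]
  · refine setLIntegral_congr_fun measurableSet_Ioo (fun s hs => ?_)
    have hb1 := hb1pos s (hsub hs)
    have hb2 := hb2pos s (hsub hs)
    rw [← ENNReal.ofReal_rpow_of_pos (div_pos hb1 hb2), ENNReal.ofReal_div_of_pos hb2]
  · rw [EventuallyLE, ae_restrict_iff' measurableSet_Ioo]
    refine ae_of_all _ fun s hs => ?_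
    exact Real.rpow_nonneg (div_nonneg (hb1pos s (hsub hs)).le (hb2pos s (hsub hs)).le) p

lemma sigma_mem_Ioo {p : ℝ} {b1 b2 σ : ℝ → ℝ} (hσ : IsSigma p b1 b2 σ)
    {t : ℝ} (ht : t ∈ Ioo (0:ℝ) 1) : σ t ∈ Ioo (0:ℝ) 1 := by
  have h0 : σ 0 < σ t := hσ.1 (left_mem_Icc.mpr zero_le_one) ⟨ht.1.le, ht.2.le⟩ ht.1
  have h1' : σ t < σ 1 := hσ.1 ⟨ht.1.le, ht.2.le⟩ (right_mem_Icc.mpr zero_le_one) ht.2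
  rw [hσ.2.2.1] at h0
  rw [hσ.2.2.2.1] at h1'
  exact ⟨h0, h1'⟩

lemma kar {p : ℝ} (hp : 0 < p) {b1 b2 σ : ℝ → ℝ}
    (h1 : SlowlyVarying b1) (h2 : SlowlyVarying b2)
    (hσ : IsSigma p b1 b2 σ) :
    ∃ M : ℝ≥0∞, M ≠ ⊤ ∧ ∀ t ∈ Ioo (0:ℝ) 1, ∀ s : ℝ, σ t ^ p ≤ s → s < 1 →
      (ENNReal.ofReal t) ^ p * (ENNReal.ofReal (b2 s)) ^ p ≤
        M * ∫⁻ u in Ioo (0:ℝ) (s/2), (ENNReal.ofReal (b1 u)) ^ p := by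
  obtain ⟨hb1m, hb1pos, -⟩ := id h1
  obtain ⟨hb2m, hb2pos, -⟩ := id h2
  set ε : ℝ := 1/(4*p) with hεdef
  have hε : 0 < ε := by positivity
  have hεp : ε * p = 1/4 := by
    rw [hεdef]; field_simp
  obtain ⟨D1, hD11, hD1⟩ := sv_compare h1 hε
  obtain ⟨D2, hD21, hD2⟩ := sv_compare h2 hε
  have hD1p : (0:ℝ) < D1 := by linarith
  have hD2p : (0:ℝ) < D2 := by linarith
  set Creal : ℝ := ∫ s in Ioo (0:ℝ) 1, (b1 s / b2 s) ^ p with hCdef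
  have hCpos : 0 < Creal := hσ.2.2.2.2.2.1
  have hCint : IntegrableOn (fun s => (b1 s / b2 s) ^ p) (Ioo (0:ℝ) 1) := hσ.2.2.2.2.1
  set E1 : ℝ := D1 ^ p * D2 ^ p with hE1def
  have hE1pos : 0 < E1 := by positivity
  set c3 : ℝ := (4/5) * (2:ℝ) ^ (-(5/4) : ℝ) with hc3def
  have hc3pos : 0 < c3 := by positivity
  refine ⟨(ENNReal.ofReal Creal)⁻¹ * (ENNReal.ofReal (2*E1) *
    ((ENNReal.ofReal c3)⁻¹ * ENNReal.ofReal (D1 ^ p))), ?_, ?_⟩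
  · exact ENNReal.mul_ne_top (ENNReal.inv_ne_top.mpr (ENNReal.ofReal_pos.mpr hCpos).ne')
      (ENNReal.mul_ne_top ENNReal.ofReal_ne_top
        (ENNReal.mul_ne_top (ENNReal.inv_ne_top.mpr (ENNReal.ofReal_pos.mpr hc3pos).ne')
          ENNReal.ofReal_ne_top))
  intro t ht s has hs1
  have hσt : σ t ∈ Ioo (0:ℝ) 1 := sigma_mem_Ioo hσ ht
  have hap : 0 < σ t ^ p := Real.rpow_pos_of_pos hσt.1 p
  have hs0 : 0 < s := lt_of_lt_of_le hap has
  have hsI : s ∈ Ioo (0:ℝ) 1 := ⟨hs0, hs1⟩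
  have hb1s : 0 < b1 s := hb1pos s hsI
  have hb2s : 0 < b2 s := hb2pos s hsI
  set J : ℝ≥0∞ := ∫⁻ u in Ioo (0:ℝ) (s/2), (ENNReal.ofReal (b1 u)) ^ p with hJdef
  set L : ℝ≥0∞ := ∫⁻ u in Ioo (0:ℝ) s, (ENNReal.ofReal (b1 u) / ENNReal.ofReal (b2 u)) ^ p
    with hLdef
  -- Step Ia
  have hIa : (ENNReal.ofReal t) ^ p * ENNReal.ofReal Creal ≤ L := by
    have h7 := hσ.2.2.2.2.2.2 t ⟨ht.1.le, ht.2.le⟩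
    have hre : t ^ p * Creal = ∫ u in Ioo (0:ℝ) (σ t ^ p), (b1 u / b2 u) ^ p := by
      rw [h7, ← hCdef]
      field_simp
    have hof : (ENNReal.ofReal t) ^ p * ENNReal.ofReal Creal =
        ∫⁻ u in Ioo (0:ℝ) (σ t ^ p), (ENNReal.ofReal (b1 u) / ENNReal.ofReal (b2 u)) ^ p := by
      rw [ENNReal.ofReal_rpow_of_pos ht.1, ← ENNReal.ofReal_mul (Real.rpow_nonneg ht.1.le p),
        hre]
      exact conv_L hb1pos hb2pos hCint (le_of_lt (lt_of_le_of_lt has hs1))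
    rw [hof, hLdef]
    exact lintegral_mono_set (Ioo_subset_Ioo le_rfl has)
  -- Step Ib
  have hIb : (ENNReal.ofReal (b2 s)) ^ p * L ≤
      ENNReal.ofReal (2*E1) * (ENNReal.ofReal s * (ENNReal.ofReal (b1 s)) ^ p) := by
    have hmeasL : Measurable fun u =>
        (ENNReal.ofReal (b1 u) / ENNReal.ofReal (b2 u)) ^ p :=
      ((hb1m.ennreal_ofReal).div (hb2m.ennreal_ofReal)).pow_const p
    rw [hLdef, ← lintegral_const_mul _ hmeasL]
    have hpt : ∀ u ∈ Ioo (0:ℝ) s,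
        (ENNReal.ofReal (b2 s)) ^ p * (ENNReal.ofReal (b1 u) / ENNReal.ofReal (b2 u)) ^ p ≤
          ENNReal.ofReal (E1 * (b1 s) ^ p * s ^ ((1:ℝ)/2)) * ENNReal.ofReal (u ^ (-((1:ℝ)/2))) := by
      intro u hu
      have hb1u : 0 < b1 u := hb1pos u ⟨hu.1, hu.2.trans hs1⟩
      have hb2u : 0 < b2 u := hb2pos u ⟨hu.1, hu.2.trans hs1⟩
      have hsu : 0 < s/u := div_pos hs0 hu.1
      have hre : (b2 s * (b1 u / b2 u)) ^ p ≤
          E1 * (b1 s) ^ p * s ^ ((1:ℝ)/2) * u ^ (-((1:ℝ)/2)) := by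
        have h2su : b2 s ≤ D2 * (s/u) ^ ε * b2 u := (hD2 u s hu.1 hu.2.le hs1).1
        have h1us : b1 u ≤ D1 * (s/u) ^ ε * b1 s := (hD1 u s hu.1 hu.2.le hs1).2
        have hqpos : (0:ℝ) < (s/u) ^ ε := Real.rpow_pos_of_pos hsu ε
        have hbase : b2 s * (b1 u / b2 u) ≤ D1 * D2 * (s/u) ^ (2*ε) * b1 s := by
          have step1 : b2 s * (b1 u / b2 u) ≤ D2 * (s/u) ^ ε * b1 u := by
            rw [mul_div_assoc', div_le_iff₀ hb2u]
            calc b2 s * b1 u ≤ (D2 * (s/u) ^ ε * b2 u) * b1 u :=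
                  mul_le_mul_of_nonneg_right h2su hb1u.le
              _ = D2 * (s/u) ^ ε * b1 u * b2 u := by ring
          calc b2 s * (b1 u / b2 u) ≤ D2 * (s/u) ^ ε * b1 u := step1
            _ ≤ D2 * (s/u) ^ ε * (D1 * (s/u) ^ ε * b1 s) :=
                mul_le_mul_of_nonneg_left h1us (by positivity)
            _ = D1 * D2 * ((s/u) ^ ε * (s/u) ^ ε) * b1 s := by ring
            _ = D1 * D2 * (s/u) ^ (2*ε) * b1 s := by
                rw [← Real.rpow_add hsu]
                ring_nf
        have hsplit : ((s/u) ^ (2*ε)) ^ p = s ^ ((1:ℝ)/2) * u ^ (-((1:ℝ)/2)) := by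
          rw [rpow_comp' hsu.le (show 2*ε*p = (1:ℝ)/2 by rw [mul_assoc, hεp]; norm_num)]
          exact rpow_div_split hs0 hu.1 _
        calc (b2 s * (b1 u / b2 u)) ^ p ≤ (D1 * D2 * (s/u) ^ (2*ε) * b1 s) ^ p :=
              Real.rpow_le_rpow (by positivity) hbase hp.le
          _ = (D1 * D2) ^ p * ((s/u) ^ (2*ε)) ^ p * (b1 s) ^ p := by
              rw [Real.mul_rpow (by positivity) hb1s.le,
                Real.mul_rpow (by positivity) (by positivity)]
          _ = E1 * (b1 s) ^ p * s ^ ((1:ℝ)/2) * u ^ (-((1:ℝ)/2)) := by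
              rw [hsplit, Real.mul_rpow hD1p.le hD2p.le, hE1def]
              ring
      calc (ENNReal.ofReal (b2 s)) ^ p * (ENNReal.ofReal (b1 u) / ENNReal.ofReal (b2 u)) ^ p
          = ENNReal.ofReal ((b2 s * (b1 u / b2 u)) ^ p) := by
            rw [← ENNReal.mul_rpow_of_nonneg _ _ hp.le, ← ENNReal.ofReal_div_of_pos hb2u,
              ← ENNReal.ofReal_mul hb2s.le, ENNReal.ofReal_rpow_of_pos (by positivity)]
        _ ≤ ENNReal.ofReal (E1 * (b1 s) ^ p * s ^ ((1:ℝ)/2) * u ^ (-((1:ℝ)/2))) :=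
            ENNReal.ofReal_le_ofReal hre
        _ = ENNReal.ofReal (E1 * (b1 s) ^ p * s ^ ((1:ℝ)/2)) *
              ENNReal.ofReal (u ^ (-((1:ℝ)/2))) := by
            rw [← ENNReal.ofReal_mul (by positivity)]
    calc (∫⁻ u in Ioo (0:ℝ) s,
          (ENNReal.ofReal (b2 s)) ^ p * (ENNReal.ofReal (b1 u) / ENNReal.ofReal (b2 u)) ^ p)
        ≤ ∫⁻ u in Ioo (0:ℝ) s, ENNReal.ofReal (E1 * (b1 s) ^ p * s ^ ((1:ℝ)/2)) *
            ENNReal.ofReal (u ^ (-((1:ℝ)/2))) :=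
          setLIntegral_mono (measurable_const.mul (measurable_ofReal_rpow _)) hpt
      _ = ENNReal.ofReal (E1 * (b1 s) ^ p * s ^ ((1:ℝ)/2)) *
            ∫⁻ u in Ioo (0:ℝ) s, ENNReal.ofReal (u ^ (-((1:ℝ)/2))) :=
          lintegral_const_mul _ (measurable_ofReal_rpow _)
      _ = ENNReal.ofReal (E1 * (b1 s) ^ p * s ^ ((1:ℝ)/2)) *
            ENNReal.ofReal (s ^ (-((1:ℝ)/2) + 1) / (-((1:ℝ)/2) + 1)) := by
          rw [lintegral_rpow_Ioo (by norm_num) hs0]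
      _ = ENNReal.ofReal (2*E1) * (ENNReal.ofReal s * (ENNReal.ofReal (b1 s)) ^ p) := by
          rw [ENNReal.ofReal_rpow_of_pos hb1s,
            ← ENNReal.ofReal_mul (mul_nonneg (mul_nonneg hE1pos.le
              (Real.rpow_nonneg hb1s.le p)) (Real.rpow_nonneg hs0.le _)),
            ← ENNReal.ofReal_mul hs0.le,
            ← ENNReal.ofReal_mul (by linarith [hE1pos] : (0:ℝ) ≤ 2*E1)]
          congr 1
          have hhalf : s ^ ((1:ℝ)/2) * s ^ ((1:ℝ)/2) = s := by
            rw [← Real.rpow_add hs0]; norm_num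
          rw [show (-((1:ℝ)/2) + 1) = (1:ℝ)/2 by norm_num]
          have : s ^ ((1:ℝ)/2) / ((1:ℝ)/2) = s ^ ((1:ℝ)/2) * 2 := by
            rw [div_eq_mul_inv]; norm_num
          rw [this]
          linear_combination (2 * E1 * (b1 s) ^ p) * hhalf
  -- Step II
  have hII : ENNReal.ofReal c3 * (ENNReal.ofReal s * (ENNReal.ofReal (b1 s)) ^ p) ≤
      ENNReal.ofReal (D1 ^ p) * J := by
    have hpt : ∀ u ∈ Ioo (0:ℝ) (s/2),
        ENNReal.ofReal (s ^ (-((1:ℝ)/4)) * (b1 s) ^ p) * ENNReal.ofReal (u ^ ((1:ℝ)/4)) ≤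
          ENNReal.ofReal (D1 ^ p) * (ENNReal.ofReal (b1 u)) ^ p := by
      intro u hu
      have hu0 : 0 < u := hu.1
      have hus : u ≤ s := by
        have := hu.2
        linarith
      have hu1 : u ∈ Ioo (0:ℝ) 1 := ⟨hu0, lt_of_le_of_lt hus hs1⟩
      have hb1u : 0 < b1 u := hb1pos u hu1
      have hsu : 0 < s/u := div_pos hs0 hu0
      have hre : s ^ (-((1:ℝ)/4)) * (b1 s) ^ p * u ^ ((1:ℝ)/4) ≤ D1 ^ p * (b1 u) ^ p := by
        have hsb : b1 s ≤ D1 * (s/u) ^ ε * b1 u := (hD1 u s hu0 hus hs1).1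
        have hsbp : (b1 s) ^ p ≤ D1 ^ p * (s ^ ((1:ℝ)/4) * u ^ (-((1:ℝ)/4))) * (b1 u) ^ p := by
          have hsplit : ((s/u) ^ ε) ^ p = s ^ ((1:ℝ)/4) * u ^ (-((1:ℝ)/4)) := by
            rw [rpow_comp' hsu.le hεp]
            exact rpow_div_split hs0 hu0 _
          calc (b1 s) ^ p ≤ (D1 * (s/u) ^ ε * b1 u) ^ p :=
                Real.rpow_le_rpow hb1s.le hsb hp.le
            _ = D1 ^ p * (s ^ ((1:ℝ)/4) * u ^ (-((1:ℝ)/4))) * (b1 u) ^ p := by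
                rw [Real.mul_rpow (by positivity) hb1u.le,
                  Real.mul_rpow hD1p.le (by positivity), hsplit]
        have hcs : s ^ (-((1:ℝ)/4)) * s ^ ((1:ℝ)/4) = 1 := by
          rw [← Real.rpow_add hs0]; norm_num
        have hcu : u ^ (-((1:ℝ)/4)) * u ^ ((1:ℝ)/4) = 1 := by
          rw [← Real.rpow_add hu0]; norm_num
        calc s ^ (-((1:ℝ)/4)) * (b1 s) ^ p * u ^ ((1:ℝ)/4)
            ≤ s ^ (-((1:ℝ)/4)) * (D1 ^ p * (s ^ ((1:ℝ)/4) * u ^ (-((1:ℝ)/4))) * (b1 u) ^ p) *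
                u ^ ((1:ℝ)/4) := by
              have h1 : (0:ℝ) ≤ s ^ (-((1:ℝ)/4)) := by positivity
              have h2 : (0:ℝ) ≤ u ^ ((1:ℝ)/4) := by positivity
              exact mul_le_mul_of_nonneg_right
                (mul_le_mul_of_nonneg_left hsbp h1) h2
          _ = D1 ^ p * (b1 u) ^ p := by
              linear_combination (D1 ^ p * (b1 u) ^ p * u ^ (-((1:ℝ)/4)) * u ^ ((1:ℝ)/4)) * hcs
                + (D1 ^ p * (b1 u) ^ p) * hcu
      calc ENNReal.ofReal (s ^ (-((1:ℝ)/4)) * (b1 s) ^ p) * ENNReal.ofReal (u ^ ((1:ℝ)/4))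
          = ENNReal.ofReal (s ^ (-((1:ℝ)/4)) * (b1 s) ^ p * u ^ ((1:ℝ)/4)) := by
            rw [← ENNReal.ofReal_mul (by positivity)]
        _ ≤ ENNReal.ofReal (D1 ^ p * (b1 u) ^ p) := ENNReal.ofReal_le_ofReal hre
        _ = ENNReal.ofReal (D1 ^ p) * (ENNReal.ofReal (b1 u)) ^ p := by
            rw [ENNReal.ofReal_mul (by positivity), ENNReal.ofReal_rpow_of_pos hb1u]
    have hs20 : 0 < s/2 := by linarith
    calc ENNReal.ofReal c3 * (ENNReal.ofReal s * (ENNReal.ofReal (b1 s)) ^ p)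
        = ENNReal.ofReal (s ^ (-((1:ℝ)/4)) * (b1 s) ^ p) *
            ENNReal.ofReal ((s/2) ^ (((1:ℝ)/4) + 1) / (((1:ℝ)/4) + 1)) := by
          rw [ENNReal.ofReal_rpow_of_pos hb1s, ← ENNReal.ofReal_mul (by positivity),
            ← ENNReal.ofReal_mul hc3pos.le, ← ENNReal.ofReal_mul (by positivity)]
          congr 1
          have hsplit2 : (s/2) ^ ((5:ℝ)/4) = s ^ ((5:ℝ)/4) * (2:ℝ) ^ (-(5/4) : ℝ) := by
            rw [Real.div_rpow hs0.le (by norm_num), Real.rpow_neg (by norm_num : (0:ℝ) ≤ 2),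
              div_eq_mul_inv]
          have hss : s ^ (-((1:ℝ)/4)) * s ^ ((5:ℝ)/4) = s := by
            rw [← Real.rpow_add hs0]; norm_num
          rw [show (((1:ℝ)/4) + 1) = (5:ℝ)/4 by norm_num, hsplit2, hc3def]
          have hd : (s ^ ((5:ℝ)/4) * (2:ℝ) ^ (-(5/4) : ℝ)) / ((5:ℝ)/4) =
              s ^ ((5:ℝ)/4) * (2:ℝ) ^ (-(5/4) : ℝ) * (4/5) := by
            rw [div_eq_mul_inv]; norm_num
          rw [hd]
          generalize s ^ (-((1:ℝ)/4)) = w1 at hss ⊢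
          generalize s ^ ((5:ℝ)/4) = w2 at hss ⊢
          generalize (2:ℝ) ^ (-(5/4) : ℝ) = w3
          linear_combination (w3 * b1 s ^ p * (-4/5)) * hss
      _ = ENNReal.ofReal (s ^ (-((1:ℝ)/4)) * (b1 s) ^ p) *
            ∫⁻ u in Ioo (0:ℝ) (s/2), ENNReal.ofReal (u ^ ((1:ℝ)/4)) := by
          rw [lintegral_rpow_Ioo (by norm_num) hs20]
      _ = ∫⁻ u in Ioo (0:ℝ) (s/2), ENNReal.ofReal (s ^ (-((1:ℝ)/4)) * (b1 s) ^ p) *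
            ENNReal.ofReal (u ^ ((1:ℝ)/4)) :=
          (lintegral_const_mul _ (measurable_ofReal_rpow _)).symm
      _ ≤ ∫⁻ u in Ioo (0:ℝ) (s/2), ENNReal.ofReal (D1 ^ p) * (ENNReal.ofReal (b1 u)) ^ p :=
          setLIntegral_mono (measurable_const.mul ((hb1m.ennreal_ofReal).pow_const p)) hpt
      _ = ENNReal.ofReal (D1 ^ p) * J := by
          rw [hJdef, lintegral_const_mul _ ((hb1m.ennreal_ofReal).pow_const p)]
  -- Combine
  have hC0 : ENNReal.ofReal Creal ≠ 0 := (ENNReal.ofReal_pos.mpr hCpos).ne'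
  have hc30 : ENNReal.ofReal c3 ≠ 0 := (ENNReal.ofReal_pos.mpr hc3pos).ne'
  have hcomb2 : ENNReal.ofReal s * (ENNReal.ofReal (b1 s)) ^ p ≤
      (ENNReal.ofReal c3)⁻¹ * (ENNReal.ofReal (D1 ^ p) * J) :=
    le_inv_mul_of_mul_le' (by rw [mul_comm]; exact hII) hc30 ENNReal.ofReal_ne_top
  have hcomb1 : ((ENNReal.ofReal t) ^ p * (ENNReal.ofReal (b2 s)) ^ p) * ENNReal.ofReal Creal ≤
      ENNReal.ofReal (2*E1) * ((ENNReal.ofReal c3)⁻¹ * (ENNReal.ofReal (D1 ^ p) * J)) := by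
    calc ((ENNReal.ofReal t) ^ p * (ENNReal.ofReal (b2 s)) ^ p) * ENNReal.ofReal Creal
        = (ENNReal.ofReal (b2 s)) ^ p * ((ENNReal.ofReal t) ^ p * ENNReal.ofReal Creal) := by
          ring
      _ ≤ (ENNReal.ofReal (b2 s)) ^ p * L := mul_le_mul_right hIa _
      _ ≤ ENNReal.ofReal (2*E1) * (ENNReal.ofReal s * (ENNReal.ofReal (b1 s)) ^ p) := hIb
      _ ≤ ENNReal.ofReal (2*E1) * ((ENNReal.ofReal c3)⁻¹ * (ENNReal.ofReal (D1 ^ p) * J)) :=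
          mul_le_mul_right hcomb2 _
  calc (ENNReal.ofReal t) ^ p * (ENNReal.ofReal (b2 s)) ^ p
      ≤ (ENNReal.ofReal Creal)⁻¹ *
          (ENNReal.ofReal (2*E1) * ((ENNReal.ofReal c3)⁻¹ * (ENNReal.ofReal (D1 ^ p) * J))) :=
        le_inv_mul_of_mul_le' hcomb1 hC0 ENNReal.ofReal_ne_top
    _ = (ENNReal.ofReal Creal)⁻¹ * (ENNReal.ofReal (2*E1) *
          ((ENNReal.ofReal c3)⁻¹ * ENNReal.ofReal (D1 ^ p))) * J := by
        ring

lemma einv_le {x y K : ℝ≥0∞} (h : x ≤ K * y) (hx0 : x ≠ 0) (hxt : x ≠ ⊤) :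
    y⁻¹ ≤ K * x⁻¹ := by
  have h1 : x * y⁻¹ ≤ K := by
    calc x * y⁻¹ ≤ K * y * y⁻¹ := mul_le_mul_left h _
      _ = K * (y * y⁻¹) := by rw [mul_assoc]
      _ ≤ K * 1 := mul_le_mul_right (ENNReal.mul_inv_le_one y) _
      _ = K := mul_one _
  calc y⁻¹ = x⁻¹ * (x * y⁻¹) := by
        rw [← mul_assoc, ENNReal.inv_mul_cancel hx0 hxt, one_mul]
    _ ≤ x⁻¹ * K := mul_le_mul_right h1 _
    _ = K * x⁻¹ := mul_comm _ _

lemma emul_inv_le {x y K : ℝ≥0∞} (h : x ≤ K * y) : x * y⁻¹ ≤ K := by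
  calc x * y⁻¹ ≤ K * y * y⁻¹ := mul_le_mul_left h _
    _ = K * (y * y⁻¹) := by rw [mul_assoc]
    _ ≤ K * 1 := mul_le_mul_right (ENNReal.mul_inv_le_one y) _
    _ = K := mul_one _

lemma add_rpow_le2 {x y : ℝ≥0∞} {q : ℝ} (hq : 0 ≤ q) :
    (x + y) ^ q ≤ 2 ^ q * (x ^ q + y ^ q) := by
  have h1 : x + y ≤ 2 * max x y := by
    rw [two_mul]
    exact add_le_add (le_max_left x y) (le_max_right x y)
  calc (x + y) ^ q ≤ (2 * max x y) ^ q := ENNReal.rpow_le_rpow h1 hq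
    _ = 2 ^ q * (max x y) ^ q := ENNReal.mul_rpow_of_nonneg _ _ hq
    _ ≤ 2 ^ q * (x ^ q + y ^ q) := by
        refine mul_le_mul_right ?_ _
        rcases max_cases x y with ⟨hm, _⟩ | ⟨hm, _⟩ <;> rw [hm]
        · exact le_add_right le_rfl
        · exact le_add_left le_rfl

lemma erpow_rpow_inv {x : ℝ≥0∞} {p : ℝ} (hp : p ≠ 0) : (x ^ p) ^ (1/p) = x := by
  rw [← ENNReal.rpow_mul, mul_one_div, div_self hp, ENNReal.rpow_one]

lemma erpow_inv_rpow {x : ℝ≥0∞} {p : ℝ} (hp : p ≠ 0) : (x ^ (1/p)) ^ p = x := by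
  rw [← ENNReal.rpow_mul, one_div, inv_mul_cancel₀ hp, ENNReal.rpow_one]

lemma sigma_ident {p : ℝ} (hp : 0 < p) {b1 b2 σ : ℝ → ℝ}
    (hb1pos : ∀ u ∈ Ioo (0:ℝ) 1, 0 < b1 u) (hb2pos : ∀ u ∈ Ioo (0:ℝ) 1, 0 < b2 u)
    (hσ : IsSigma p b1 b2 σ) {t : ℝ} (ht : t ∈ Ioo (0:ℝ) 1) :
    ∫⁻ u in Ioo (0:ℝ) (σ t ^ p), (ENNReal.ofReal (b1 u) / ENNReal.ofReal (b2 u)) ^ p =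
      (ENNReal.ofReal t) ^ p *
        ENNReal.ofReal (∫ s in Ioo (0:ℝ) 1, (b1 s / b2 s) ^ p) := by
  have hσt : σ t ∈ Ioo (0:ℝ) 1 := sigma_mem_Ioo hσ ht
  have hap1 : σ t ^ p ≤ 1 := Real.rpow_le_one hσt.1.le hσt.2.le hp.le
  have h7 := hσ.2.2.2.2.2.2 t ⟨ht.1.le, ht.2.le⟩
  have hCpos : 0 < ∫ s in Ioo (0:ℝ) 1, (b1 s / b2 s) ^ p := hσ.2.2.2.2.2.1
  have hre : t ^ p * ∫ s in Ioo (0:ℝ) 1, (b1 s / b2 s) ^ p =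
      ∫ u in Ioo (0:ℝ) (σ t ^ p), (b1 u / b2 u) ^ p := by
    rw [h7]
    field_simp
  rw [← conv_L hb1pos hb2pos hσ.2.2.2.2.1 hap1, ← hre,
    ENNReal.ofReal_mul (Real.rpow_nonneg ht.1.le p), ENNReal.ofReal_rpow_of_pos ht.1]

section UpperBound
variable {β : Type*} [MeasurableSpace β]

lemma kfun_upper (ν : Measure β) (p : ℝ) (hp : 0 < p) (b1 b2 : ℝ → ℝ)
    (hb1m : Measurable b1)
    (hb2pos : ∀ u ∈ Ioo (0:ℝ) 1, 0 < b2 u) (hmon : MonotoneOn b2 (Ioo (0:ℝ) 1))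
    (g : β → ℝ) {t : ℝ} (ht : t ∈ Ioo (0:ℝ) 1) {a : ℝ} (ha : a ∈ Ioo (0:ℝ) 1) :
    Kfun (OKnorm p b1 ν) (OKnormInf b2 ν) g t ≤
      (∫⁻ s in Ioo (0:ℝ) a, (rearr ν g s * ENNReal.ofReal (b1 s)) ^ p) ^ (1/p)
        + ENNReal.ofReal t * ⨆ s ∈ Ico a 1, rearr ν g s * ENNReal.ofReal (b2 s) := by
  set A : ℝ≥0∞ := (∫⁻ s in Ioo (0:ℝ) a, (rearr ν g s * ENNReal.ofReal (b1 s)) ^ p) ^ (1/p)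
    with hA
  set B : ℝ≥0∞ := ⨆ s ∈ Ico a 1, rearr ν g s * ENNReal.ofReal (b2 s) with hB
  have hb2a : 0 < b2 a := hb2pos a ha
  have hBa : rearr ν g a * ENNReal.ofReal (b2 a) ≤ B := by
    rw [hB]
    exact le_iSup₂ (f := fun s (_ : s ∈ Ico a 1) => rearr ν g s * ENNReal.ofReal (b2 s)) a
      ⟨le_refl a, ha.2⟩
  by_cases hfin : rearr ν g a = ⊤
  · have hBtop : B = ⊤ := by
      rw [eq_top_iff]
      calc (⊤:ℝ≥0∞) = ⊤ * ENNReal.ofReal (b2 a) := by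
            rw [ENNReal.top_mul (ENNReal.ofReal_pos.mpr hb2a).ne']
        _ = rearr ν g a * ENNReal.ofReal (b2 a) := by rw [hfin]
        _ ≤ B := hBa
    rw [hBtop, ENNReal.mul_top (ENNReal.ofReal_pos.mpr ht.1).ne']
    simp
  · -- main case
    refine ENNReal.le_of_forall_pos_le_add fun ε hε _ => ?_
    set δ : ℝ≥0∞ := (ε : ℝ≥0∞) / (ENNReal.ofReal t * ENNReal.ofReal (b2 a)) with hδ
    have hδpos : 0 < δ := ENNReal.div_pos (by exact_mod_cast hε.ne')
      (by finiteness)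
    obtain ⟨lam, hlamtop, hlamle, hlammem⟩ := rearr_exists_near ν g hfin hδpos
    set r : ℝ := lam.toReal with hr
    have hr0 : 0 ≤ r := ENNReal.toReal_nonneg
    have hofr : ENNReal.ofReal r = lam := ENNReal.ofReal_toReal hlamtop
    set g1 : β → ℝ := fun x => max (-r) (min (g x) r) with hg1
    set g0 : β → ℝ := fun x => g x - g1 x with hg0
    have hdecomp : g = g0 + g1 := by
      funext x
      simp [hg0, hg1]
    have hK : Kfun (OKnorm p b1 ν) (OKnormInf b2 ν) g t ≤
        OKnorm p b1 ν g0 + ENNReal.ofReal t * OKnormInf b2 ν g1 := by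
      rw [Kfun]
      exact iInf_le_of_le g0 (iInf_le_of_le g1 (iInf_le _ hdecomp))
    have hN0 : OKnorm p b1 ν g0 ≤ A := by
      rw [OKnorm, hA]
      refine ENNReal.rpow_le_rpow ?_ (by positivity)
      have hzero : ∀ s ∈ Ico a 1, rearr ν g0 s = 0 := by
        intro s hs
        refine le_antisymm ?_ zero_le
        refine rearr_le_of_mem ν g0 ?_
        have hseteq : {x | (0:ℝ≥0∞) < ENNReal.ofReal |g0 x|} = {x | lam < ENNReal.ofReal |g x|} := by
          ext x
          simp only [mem_setOf_eq]
          rw [ENNReal.ofReal_pos, ← hofr,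
            ENNReal.ofReal_lt_ofReal_iff_of_nonneg hr0]
          exact (clamp_facts hr0 (g x)).2.2.1
        rw [hseteq]
        exact hlammem.trans (ENNReal.ofReal_le_ofReal hs.1)
      calc ∫⁻ u in Ioo (0:ℝ) 1, (ENNReal.ofReal (b1 u) * rearr ν g0 u) ^ p
          ≤ ∫⁻ u in Ioo (0:ℝ) a ∪ Ico a 1, (ENNReal.ofReal (b1 u) * rearr ν g0 u) ^ p := by
            refine lintegral_mono_set fun u hu => ?_
            rcases lt_or_ge u a with h | h
            · exact Or.inl ⟨hu.1, h⟩
            · exact Or.inr ⟨h, hu.2⟩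
        _ ≤ (∫⁻ u in Ioo (0:ℝ) a, (ENNReal.ofReal (b1 u) * rearr ν g0 u) ^ p)
            + ∫⁻ u in Ico a 1, (ENNReal.ofReal (b1 u) * rearr ν g0 u) ^ p :=
            lintegral_union_le _ _ _
        _ ≤ (∫⁻ u in Ioo (0:ℝ) a, (rearr ν g u * ENNReal.ofReal (b1 u)) ^ p) + 0 := by
            refine add_le_add ?_ ?_
            · refine setLIntegral_mono (by
                  exact ((rearr_measurable ν g).mul hb1m.ennreal_ofReal).pow_const p)
                fun u _ => ?_
              rw [mul_comm]
              refine ENNReal.rpow_le_rpow ?_ hp.le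
              exact mul_le_mul_left (rearr_mono_abs ν g0 g
                (fun x => (clamp_facts hr0 (g x)).2.1) u) _
            · calc ∫⁻ u in Ico a 1, (ENNReal.ofReal (b1 u) * rearr ν g0 u) ^ p
                  ≤ ∫⁻ _ in Ico a 1, (0:ℝ≥0∞) := by
                    refine setLIntegral_mono measurable_const fun u hu => ?_
                    rw [hzero u hu, mul_zero, ENNReal.zero_rpow_of_pos hp]
                _ = 0 := lintegral_zero
        _ = ∫⁻ u in Ioo (0:ℝ) a, (rearr ν g u * ENNReal.ofReal (b1 u)) ^ p := add_zero _
    have hN1 : OKnormInf b2 ν g1 ≤ B + ENNReal.ofReal (b2 a) * δ := by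
      rw [OKnormInf]
      refine iSup₂_le fun u hu => ?_
      rcases le_or_gt a u with h | h
      · calc ENNReal.ofReal (b2 u) * rearr ν g1 u
            ≤ ENNReal.ofReal (b2 u) * rearr ν g u :=
              mul_le_mul_right (rearr_mono_abs ν g1 g
                (fun x => (clamp_facts hr0 (g x)).1) u) _
          _ ≤ B := by
              rw [hB, mul_comm]
              exact le_iSup₂ (f := fun s (_ : s ∈ Ico a 1) =>
                rearr ν g s * ENNReal.ofReal (b2 s)) u ⟨h, hu.2⟩
          _ ≤ B + ENNReal.ofReal (b2 a) * δ := le_self_add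
      · have hg1lam : rearr ν g1 u ≤ lam := by
          refine rearr_le_of_mem ν g1 ?_
          have : {x | lam < ENNReal.ofReal |g1 x|} = ∅ := by
            ext x
            simp only [mem_setOf_eq, mem_empty_iff_false, iff_false, not_lt, ← hofr]
            exact ENNReal.ofReal_le_ofReal (clamp_facts hr0 (g x)).2.2.2
          rw [this]
          simp [ENNReal.ofReal_le_ofReal hu.1.le]
        calc ENNReal.ofReal (b2 u) * rearr ν g1 u
            ≤ ENNReal.ofReal (b2 a) * lam :=
              mul_le_mul' (ENNReal.ofReal_le_ofReal (hmon hu ha h.le)) hg1lam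
          _ ≤ ENNReal.ofReal (b2 a) * (rearr ν g a + δ) := mul_le_mul_right hlamle _
          _ = ENNReal.ofReal (b2 a) * rearr ν g a + ENNReal.ofReal (b2 a) * δ := mul_add _ _ _
          _ ≤ B + ENNReal.ofReal (b2 a) * δ := by
              refine add_le_add ?_ (le_refl _)
              rw [mul_comm]
              exact hBa
    calc Kfun (OKnorm p b1 ν) (OKnormInf b2 ν) g t
        ≤ OKnorm p b1 ν g0 + ENNReal.ofReal t * OKnormInf b2 ν g1 := hK
      _ ≤ A + ENNReal.ofReal t * (B + ENNReal.ofReal (b2 a) * δ) :=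
          add_le_add hN0 (mul_le_mul_right hN1 _)
      _ = A + ENNReal.ofReal t * B + ENNReal.ofReal t * ENNReal.ofReal (b2 a) * δ := by
          rw [mul_add, ← add_assoc, mul_assoc]
      _ ≤ A + ENNReal.ofReal t * B + ε := by
          refine add_le_add (le_refl _) ?_
          rw [hδ]
          exact ENNReal.mul_div_le

end UpperBound

section LowerBound
variable {β : Type*} [MeasurableSpace β]

lemma kfun_lower (ν : Measure β) {p : ℝ} (hp : 0 < p)
    {b1 b2 σ : ℝ → ℝ} (h1 : SlowlyVarying b1) (h2 : SlowlyVarying b2)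
    (hσ : IsSigma p b1 b2 σ) :
    ∃ CC : ℝ≥0∞, CC ≠ 0 ∧ CC ≠ ⊤ ∧ ∀ (g g0 g1 : β → ℝ), g = g0 + g1 →
      ∀ t ∈ Ioo (0:ℝ) 1,
      (∫⁻ s in Ioo (0:ℝ) (σ t ^ p), (rearr ν g s * ENNReal.ofReal (b1 s)) ^ p) ^ (1/p)
        + ENNReal.ofReal t * ⨆ s ∈ Ico (σ t ^ p) 1, rearr ν g s * ENNReal.ofReal (b2 s)
      ≤ CC * (OKnorm p b1 ν g0 + ENNReal.ofReal t * OKnormInf b2 ν g1) := by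
  obtain ⟨hb1m, hb1pos, -⟩ := id h1
  obtain ⟨hb2m, hb2pos, -⟩ := id h2
  obtain ⟨K1, hK11, hK1⟩ := sv_doubling h1
  obtain ⟨K2, hK21, hK2⟩ := sv_doubling h2
  obtain ⟨M, hMtop, hM⟩ := kar hp h1 h2 hσ
  set Creal : ℝ := ∫ s in Ioo (0:ℝ) 1, (b1 s / b2 s) ^ p with hCdef
  have hq : (0:ℝ) ≤ 1/p := by positivity
  set oK1 : ℝ≥0∞ := ENNReal.ofReal K1 with hoK1
  set oK2 : ℝ≥0∞ := ENNReal.ofReal K2 with hoK2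
  set Mp : ℝ≥0∞ := M ^ (1/p) with hMp
  set cA : ℝ≥0∞ := 2 * 2 ^ ((1:ℝ)/p) * (oK1 * 2 ^ ((1:ℝ)/p)) with hcA
  set cA' : ℝ≥0∞ := 2 * 2 ^ ((1:ℝ)/p) * (oK2 * (ENNReal.ofReal Creal) ^ ((1:ℝ)/p)) with hcA'
  have h2top : (2:ℝ≥0∞) ^ ((1:ℝ)/p) ≠ ⊤ :=
    ENNReal.rpow_ne_top_of_nonneg hq (by norm_num)
  refine ⟨(cA + Mp) + (cA' + oK2) + 1, ?_, ?_, ?_⟩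
  · simp
  · have hcAt : cA ≠ ⊤ := by
      refine ENNReal.mul_ne_top (ENNReal.mul_ne_top (by norm_num) h2top)
        (ENNReal.mul_ne_top ENNReal.ofReal_ne_top h2top)
    have hcA't : cA' ≠ ⊤ := by
      refine ENNReal.mul_ne_top (ENNReal.mul_ne_top (by norm_num) h2top)
        (ENNReal.mul_ne_top ENNReal.ofReal_ne_top
          (ENNReal.rpow_ne_top_of_nonneg hq ENNReal.ofReal_ne_top))
    have hMpt : Mp ≠ ⊤ := ENNReal.rpow_ne_top_of_nonneg hq hMtop
    exact ENNReal.add_ne_top.mpr ⟨ENNReal.add_ne_top.mpr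
      ⟨ENNReal.add_ne_top.mpr ⟨hcAt, hMpt⟩,
        ENNReal.add_ne_top.mpr ⟨hcA't, ENNReal.ofReal_ne_top⟩⟩, by norm_num⟩
  intro g g0 g1 hdec t ht
  set a : ℝ := σ t ^ p with hadef
  have hσt : σ t ∈ Ioo (0:ℝ) 1 := sigma_mem_Ioo hσ ht
  have ha : a ∈ Ioo (0:ℝ) 1 :=
    ⟨Real.rpow_pos_of_pos hσt.1 p, Real.rpow_lt_one hσt.1.le hσt.2 hp⟩
  set N0 : ℝ≥0∞ := OKnorm p b1 ν g0 with hN0def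
  set N1 : ℝ≥0∞ := OKnormInf b2 ν g1 with hN1def
  have hN0p : N0 ^ p = ∫⁻ u in Ioo (0:ℝ) 1, (rearr ν g0 u * ENNReal.ofReal (b1 u)) ^ p := by
    rw [hN0def, OKnorm, erpow_inv_rpow hp.ne']
    exact lintegral_congr fun u => by rw [mul_comm]
  -- measurability of building blocks
  have hmr0 : Measurable fun s : ℝ => rearr ν g0 (s/2) := by
    have hanti : Antitone fun s : ℝ => rearr ν g0 (s/2) :=
      fun x y hxy => rearr_anti ν g0 (by linarith)
    exact hanti.measurable
  have hmr1 : Measurable fun s : ℝ => rearr ν g1 (s/2) := by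
    have hanti : Antitone fun s : ℝ => rearr ν g1 (s/2) :=
      fun x y hxy => rearr_anti ν g1 (by linarith)
    exact hanti.measurable
  have hmb1h : Measurable fun s : ℝ => b1 (s/2) := hb1m.comp (measurable_id.div_const 2)
  have hmb2h : Measurable fun s : ℝ => b2 (s/2) := hb2m.comp (measurable_id.div_const 2)
  -- subadditivity pointwise
  have hsub : ∀ s : ℝ, 0 < s → rearr ν g s ≤ rearr ν g0 (s/2) + rearr ν g1 (s/2) := by
    intro s hs
    have := rearr_subadd ν g g0 (s/2) (s/2) (by linarith) (by linarith) g1 hdec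
    rwa [add_halves] at this
  -- bound on rearr g1
  have hr1 : ∀ u ∈ Ioo (0:ℝ) 1, rearr ν g1 u ≤ N1 * (ENNReal.ofReal (b2 u))⁻¹ := by
    intro u hu
    have hb2u : 0 < b2 u := hb2pos u hu
    have hle : ENNReal.ofReal (b2 u) * rearr ν g1 u ≤ N1 := by
      rw [hN1def, OKnormInf]
      exact le_iSup₂ (f := fun v (_ : v ∈ Ioo (0:ℝ) 1) =>
        ENNReal.ofReal (b2 v) * rearr ν g1 v) u hu
    calc rearr ν g1 u
        = (ENNReal.ofReal (b2 u))⁻¹ * (ENNReal.ofReal (b2 u) * rearr ν g1 u) := by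
          rw [← mul_assoc, ENNReal.inv_mul_cancel (ENNReal.ofReal_pos.mpr hb2u).ne'
            ENNReal.ofReal_ne_top, one_mul]
      _ ≤ (ENNReal.ofReal (b2 u))⁻¹ * N1 := mul_le_mul_right hle _
      _ = N1 * (ENNReal.ofReal (b2 u))⁻¹ := mul_comm _ _
  -- J bound
  have hJb : ∀ s : ℝ, 0 < s → s < 1 →
      (rearr ν g0 (s/2)) ^ p * ∫⁻ u in Ioo (0:ℝ) (s/2), (ENNReal.ofReal (b1 u)) ^ p ≤
        N0 ^ p := by
    intro s hs0 hs1
    rw [hN0p]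
    calc (rearr ν g0 (s/2)) ^ p * ∫⁻ u in Ioo (0:ℝ) (s/2), (ENNReal.ofReal (b1 u)) ^ p
        = ∫⁻ u in Ioo (0:ℝ) (s/2), (rearr ν g0 (s/2)) ^ p * (ENNReal.ofReal (b1 u)) ^ p :=
          (lintegral_const_mul _ ((hb1m.ennreal_ofReal).pow_const p)).symm
      _ ≤ ∫⁻ u in Ioo (0:ℝ) (s/2), (rearr ν g0 u * ENNReal.ofReal (b1 u)) ^ p := by
          refine setLIntegral_mono
            (((rearr_measurable ν g0).mul (hb1m.ennreal_ofReal)).pow_const p)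
            fun u hu => ?_
          rw [← ENNReal.mul_rpow_of_nonneg _ _ hp.le]
          exact ENNReal.rpow_le_rpow
            (mul_le_mul_left (rearr_anti ν g0 hu.2.le) _) hp.le
      _ ≤ ∫⁻ u in Ioo (0:ℝ) 1, (rearr ν g0 u * ENNReal.ofReal (b1 u)) ^ p :=
          lintegral_mono_set (Ioo_subset_Ioo le_rfl (by linarith))
  -- the A part
  set IA : ℝ≥0∞ := ∫⁻ s in Ioo (0:ℝ) a, (rearr ν g s * ENNReal.ofReal (b1 s)) ^ p with hIA
  set Ix0 : ℝ≥0∞ := ∫⁻ s in Ioo (0:ℝ) a, (rearr ν g0 (s/2) * ENNReal.ofReal (b1 s)) ^ p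
    with hIx0
  set Ix1 : ℝ≥0∞ := ∫⁻ s in Ioo (0:ℝ) a, (rearr ν g1 (s/2) * ENNReal.ofReal (b1 s)) ^ p
    with hIx1
  have hIAle : IA ≤ 2 ^ p * (Ix0 + Ix1) := by
    have hmeas0 : Measurable fun s : ℝ => (rearr ν g0 (s/2) * ENNReal.ofReal (b1 s)) ^ p :=
      (hmr0.mul (hb1m.ennreal_ofReal)).pow_const p
    have hmeas1 : Measurable fun s : ℝ => (rearr ν g1 (s/2) * ENNReal.ofReal (b1 s)) ^ p :=
      (hmr1.mul (hb1m.ennreal_ofReal)).pow_const p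
    calc IA ≤ ∫⁻ s in Ioo (0:ℝ) a, 2 ^ p *
          ((rearr ν g0 (s/2) * ENNReal.ofReal (b1 s)) ^ p +
            (rearr ν g1 (s/2) * ENNReal.ofReal (b1 s)) ^ p) := by
          rw [hIA]
          refine setLIntegral_mono (measurable_const.mul (hmeas0.add hmeas1)) fun s hs => ?_
          calc (rearr ν g s * ENNReal.ofReal (b1 s)) ^ p
              ≤ ((rearr ν g0 (s/2) + rearr ν g1 (s/2)) * ENNReal.ofReal (b1 s)) ^ p :=
                ENNReal.rpow_le_rpow (mul_le_mul_left (hsub s hs.1) _) hp.le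
            _ = (rearr ν g0 (s/2) * ENNReal.ofReal (b1 s) +
                  rearr ν g1 (s/2) * ENNReal.ofReal (b1 s)) ^ p := by rw [add_mul]
            _ ≤ 2 ^ p * ((rearr ν g0 (s/2) * ENNReal.ofReal (b1 s)) ^ p +
                  (rearr ν g1 (s/2) * ENNReal.ofReal (b1 s)) ^ p) := add_rpow_le2 hp.le
      _ = 2 ^ p * (Ix0 + Ix1) := by
          rw [lintegral_const_mul (f := fun s : ℝ =>
              (rearr ν g0 (s/2) * ENNReal.ofReal (b1 s)) ^ p +
                (rearr ν g1 (s/2) * ENNReal.ofReal (b1 s)) ^ p) _ (hmeas0.add hmeas1), lintegral_add_left hmeas0]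
  have hIx0le : Ix0 ≤ oK1 ^ p * (2 * N0 ^ p) := by
    calc Ix0 ≤ ∫⁻ s in Ioo (0:ℝ) a,
          oK1 ^ p * (rearr ν g0 (s/2) * ENNReal.ofReal (b1 (s/2))) ^ p := by
          rw [hIx0]
          refine setLIntegral_mono
            (measurable_const.mul ((hmr0.mul hmb1h.ennreal_ofReal).pow_const p))
            fun s hs => ?_
          have hsI : s ∈ Ioo (0:ℝ) 1 := ⟨hs.1, hs.2.trans ha.2⟩
          have hd : b1 s ≤ K1 * b1 (s/2) := (hK1 s hsI).1
          calc (rearr ν g0 (s/2) * ENNReal.ofReal (b1 s)) ^ p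
              ≤ (rearr ν g0 (s/2) * (oK1 * ENNReal.ofReal (b1 (s/2)))) ^ p := by
                refine ENNReal.rpow_le_rpow (mul_le_mul_right ?_ _) hp.le
                rw [hoK1, ← ENNReal.ofReal_mul (by linarith)]
                exact ENNReal.ofReal_le_ofReal hd
            _ = oK1 ^ p * (rearr ν g0 (s/2) * ENNReal.ofReal (b1 (s/2))) ^ p := by
                rw [show rearr ν g0 (s/2) * (oK1 * ENNReal.ofReal (b1 (s/2))) =
                  oK1 * (rearr ν g0 (s/2) * ENNReal.ofReal (b1 (s/2))) by ring,
                  ENNReal.mul_rpow_of_nonneg _ _ hp.le]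
      _ = oK1 ^ p * ∫⁻ s in Ioo (0:ℝ) a,
            ((fun u => (rearr ν g0 u * ENNReal.ofReal (b1 u)) ^ p) (s/2)) :=
          lintegral_const_mul _ ((hmr0.mul hmb1h.ennreal_ofReal).pow_const p)
      _ = oK1 ^ p * (2 * ∫⁻ u in Ioo (0:ℝ) (a/2),
            (rearr ν g0 u * ENNReal.ofReal (b1 u)) ^ p) := by
          rw [lintegral_half_Ioo (fun u => (rearr ν g0 u * ENNReal.ofReal (b1 u)) ^ p) a]
      _ ≤ oK1 ^ p * (2 * N0 ^ p) := by
          refine mul_le_mul_right (mul_le_mul_right ?_ _) _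
          rw [hN0p]
          exact lintegral_mono_set (Ioo_subset_Ioo le_rfl (by linarith [ha.2]))
  have hIx1le : Ix1 ≤ (N1 * oK2) ^ p * ((ENNReal.ofReal t) ^ p * ENNReal.ofReal Creal) := by
    calc Ix1 ≤ ∫⁻ s in Ioo (0:ℝ) a, (N1 * oK2) ^ p *
          (ENNReal.ofReal (b1 s) / ENNReal.ofReal (b2 s)) ^ p := by
          rw [hIx1]
          refine setLIntegral_mono (measurable_const.mul
            (((hb1m.ennreal_ofReal).div (hb2m.ennreal_ofReal)).pow_const p)) fun s hs => ?_
          have hsI : s ∈ Ioo (0:ℝ) 1 := ⟨hs.1, hs.2.trans ha.2⟩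
          have hs2I : s/2 ∈ Ioo (0:ℝ) 1 := ⟨by linarith [hs.1], by linarith [hsI.2]⟩
          have hb2s : 0 < b2 s := hb2pos s hsI
          have hinv : (ENNReal.ofReal (b2 (s/2)))⁻¹ ≤ oK2 * (ENNReal.ofReal (b2 s))⁻¹ := by
            refine einv_le ?_ (ENNReal.ofReal_pos.mpr hb2s).ne' ENNReal.ofReal_ne_top
            rw [hoK2, ← ENNReal.ofReal_mul (by linarith)]
            exact ENNReal.ofReal_le_ofReal (hK2 s hsI).1
          have hr1s : rearr ν g1 (s/2) ≤ N1 * (oK2 * (ENNReal.ofReal (b2 s))⁻¹) :=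
            (hr1 (s/2) hs2I).trans (mul_le_mul_right hinv _)
          calc (rearr ν g1 (s/2) * ENNReal.ofReal (b1 s)) ^ p
              ≤ ((N1 * (oK2 * (ENNReal.ofReal (b2 s))⁻¹)) * ENNReal.ofReal (b1 s)) ^ p :=
                ENNReal.rpow_le_rpow (mul_le_mul_left hr1s _) hp.le
            _ = (N1 * oK2) ^ p * (ENNReal.ofReal (b1 s) / ENNReal.ofReal (b2 s)) ^ p := by
                rw [div_eq_mul_inv, ← ENNReal.mul_rpow_of_nonneg _ _ hp.le]
                congr 1
                ring
      _ = (N1 * oK2) ^ p * ((ENNReal.ofReal t) ^ p * ENNReal.ofReal Creal) := by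
          rw [lintegral_const_mul (f := fun s : ℝ =>
              (ENNReal.ofReal (b1 s) / ENNReal.ofReal (b2 s)) ^ p) _
            (((hb1m.ennreal_ofReal).div (hb2m.ennreal_ofReal)).pow_const p),
            hadef, sigma_ident hp hb1pos hb2pos hσ ht, hCdef]
  have hApart : IA ^ ((1:ℝ)/p) ≤
      cA * N0 + cA' * (ENNReal.ofReal t * N1) := by
    calc IA ^ ((1:ℝ)/p) ≤ (2 ^ p * (Ix0 + Ix1)) ^ ((1:ℝ)/p) :=
          ENNReal.rpow_le_rpow hIAle hq
      _ = 2 * (Ix0 + Ix1) ^ ((1:ℝ)/p) := by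
          rw [ENNReal.mul_rpow_of_nonneg _ _ hq, erpow_rpow_inv hp.ne']
      _ ≤ 2 * (2 ^ ((1:ℝ)/p) * (Ix0 ^ ((1:ℝ)/p) + Ix1 ^ ((1:ℝ)/p))) :=
          mul_le_mul_right (add_rpow_le2 hq) _
      _ = 2 * 2 ^ ((1:ℝ)/p) * Ix0 ^ ((1:ℝ)/p) + 2 * 2 ^ ((1:ℝ)/p) * Ix1 ^ ((1:ℝ)/p) := by
          ring
      _ ≤ cA * N0 + cA' * (ENNReal.ofReal t * N1) := by
          refine add_le_add ?_ ?_
          · calc 2 * 2 ^ ((1:ℝ)/p) * Ix0 ^ ((1:ℝ)/p)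
                ≤ 2 * 2 ^ ((1:ℝ)/p) * (oK1 ^ p * (2 * N0 ^ p)) ^ ((1:ℝ)/p) :=
                  mul_le_mul_right (ENNReal.rpow_le_rpow hIx0le hq) _
              _ = cA * N0 := by
                  rw [ENNReal.mul_rpow_of_nonneg _ _ hq, ENNReal.mul_rpow_of_nonneg _ _ hq,
                    erpow_rpow_inv hp.ne', erpow_rpow_inv hp.ne', hcA]
                  ring
          · calc 2 * 2 ^ ((1:ℝ)/p) * Ix1 ^ ((1:ℝ)/p)
                ≤ 2 * 2 ^ ((1:ℝ)/p) *
                    ((N1 * oK2) ^ p * ((ENNReal.ofReal t) ^ p * ENNReal.ofReal Creal)) ^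
                      ((1:ℝ)/p) :=
                  mul_le_mul_right (ENNReal.rpow_le_rpow hIx1le hq) _
              _ = cA' * (ENNReal.ofReal t * N1) := by
                  rw [ENNReal.mul_rpow_of_nonneg _ _ hq, ENNReal.mul_rpow_of_nonneg _ _ hq,
                    erpow_rpow_inv hp.ne', erpow_rpow_inv hp.ne', hcA']
                  ring
  -- the B part
  have hBpart : ENNReal.ofReal t * (⨆ s ∈ Ico a 1, rearr ν g s * ENNReal.ofReal (b2 s)) ≤
      Mp * N0 + oK2 * (ENNReal.ofReal t * N1) := by
    rw [ENNReal.mul_iSup]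
    refine iSup_le fun s => ?_
    rw [ENNReal.mul_iSup]
    refine iSup_le fun hs => ?_
    have hs0 : 0 < s := lt_of_lt_of_le ha.1 hs.1
    have hsI : s ∈ Ioo (0:ℝ) 1 := ⟨hs0, hs.2⟩
    have hs2I : s/2 ∈ Ioo (0:ℝ) 1 := ⟨by linarith, by linarith [hs.2]⟩
    have hT0 : ENNReal.ofReal t * (rearr ν g0 (s/2) * ENNReal.ofReal (b2 s)) ≤ Mp * N0 := by
      have hT0p : (ENNReal.ofReal t * (rearr ν g0 (s/2) * ENNReal.ofReal (b2 s))) ^ p ≤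
          M * N0 ^ p := by
        calc (ENNReal.ofReal t * (rearr ν g0 (s/2) * ENNReal.ofReal (b2 s))) ^ p
            = (ENNReal.ofReal t) ^ p * (ENNReal.ofReal (b2 s)) ^ p *
                (rearr ν g0 (s/2)) ^ p := by
              rw [show ENNReal.ofReal t * (rearr ν g0 (s/2) * ENNReal.ofReal (b2 s)) =
                ENNReal.ofReal t * ENNReal.ofReal (b2 s) * rearr ν g0 (s/2) by ring,
                ENNReal.mul_rpow_of_nonneg _ _ hp.le, ENNReal.mul_rpow_of_nonneg _ _ hp.le]
          _ ≤ M * (∫⁻ u in Ioo (0:ℝ) (s/2), (ENNReal.ofReal (b1 u)) ^ p) *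
                (rearr ν g0 (s/2)) ^ p :=
              mul_le_mul_left (hM t ht s hs.1 hs.2) _
          _ = M * ((rearr ν g0 (s/2)) ^ p *
                ∫⁻ u in Ioo (0:ℝ) (s/2), (ENNReal.ofReal (b1 u)) ^ p) := by ring
          _ ≤ M * N0 ^ p := mul_le_mul_right (hJb s hs0 hs.2) _
      calc ENNReal.ofReal t * (rearr ν g0 (s/2) * ENNReal.ofReal (b2 s))
          = ((ENNReal.ofReal t * (rearr ν g0 (s/2) * ENNReal.ofReal (b2 s))) ^ p) ^ ((1:ℝ)/p) :=
            (erpow_rpow_inv hp.ne').symm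
        _ ≤ (M * N0 ^ p) ^ ((1:ℝ)/p) := ENNReal.rpow_le_rpow hT0p hq
        _ = Mp * N0 := by
            rw [ENNReal.mul_rpow_of_nonneg _ _ hq, erpow_rpow_inv hp.ne', hMp]
    have hT1 : ENNReal.ofReal t * (rearr ν g1 (s/2) * ENNReal.ofReal (b2 s)) ≤
        oK2 * (ENNReal.ofReal t * N1) := by
      have hb2s : 0 < b2 s := hb2pos s hsI
      have hinner : rearr ν g1 (s/2) * ENNReal.ofReal (b2 s) ≤ N1 * oK2 := by
        calc rearr ν g1 (s/2) * ENNReal.ofReal (b2 s)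
            ≤ N1 * (ENNReal.ofReal (b2 (s/2)))⁻¹ * ENNReal.ofReal (b2 s) :=
              mul_le_mul_left (hr1 (s/2) hs2I) _
          _ = N1 * (ENNReal.ofReal (b2 s) * (ENNReal.ofReal (b2 (s/2)))⁻¹) := by ring
          _ ≤ N1 * oK2 := by
              refine mul_le_mul_right (emul_inv_le ?_) _
              rw [hoK2, ← ENNReal.ofReal_mul (by linarith)]
              exact ENNReal.ofReal_le_ofReal (hK2 s hsI).1
      calc ENNReal.ofReal t * (rearr ν g1 (s/2) * ENNReal.ofReal (b2 s))
          ≤ ENNReal.ofReal t * (N1 * oK2) := mul_le_mul_right hinner _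
        _ = oK2 * (ENNReal.ofReal t * N1) := by ring
    calc ENNReal.ofReal t * (rearr ν g s * ENNReal.ofReal (b2 s))
        ≤ ENNReal.ofReal t * ((rearr ν g0 (s/2) + rearr ν g1 (s/2)) * ENNReal.ofReal (b2 s)) :=
          mul_le_mul_right (mul_le_mul_left (hsub s hs0) _) _
      _ = ENNReal.ofReal t * (rearr ν g0 (s/2) * ENNReal.ofReal (b2 s)) +
            ENNReal.ofReal t * (rearr ν g1 (s/2) * ENNReal.ofReal (b2 s)) := by
          rw [add_mul, mul_add]
      _ ≤ Mp * N0 + oK2 * (ENNReal.ofReal t * N1) := add_le_add hT0 hT1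
  -- combine
  calc (∫⁻ s in Ioo (0:ℝ) a, (rearr ν g s * ENNReal.ofReal (b1 s)) ^ p) ^ (1/p)
        + ENNReal.ofReal t * ⨆ s ∈ Ico a 1, rearr ν g s * ENNReal.ofReal (b2 s)
      ≤ (cA * N0 + cA' * (ENNReal.ofReal t * N1)) +
          (Mp * N0 + oK2 * (ENNReal.ofReal t * N1)) := add_le_add hApart hBpart
    _ = (cA + Mp) * N0 + (cA' + oK2) * (ENNReal.ofReal t * N1) := by ring
    _ ≤ ((cA + Mp) + (cA' + oK2) + 1) * N0 +
          ((cA + Mp) + (cA' + oK2) + 1) * (ENNReal.ofReal t * N1) := by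
        refine add_le_add (mul_le_mul_left ?_ _) (mul_le_mul_left ?_ _)
        · exact le_add_right le_self_add
        · exact le_add_right le_add_self
    _ = ((cA + Mp) + (cA' + oK2) + 1) * (N0 + ENNReal.ofReal t * N1) := by
        rw [mul_add]

end LowerBound

end
theorem stmt_6 {β : Type*} [MeasurableSpace β] (ν : Measure β)
    [IsProbabilityMeasure ν] [NullSingletonClass ν]
    (p : ℝ) (hp : 0 < p) (b1 b2 σ : ℝ → ℝ)
    (h1 : SlowlyVarying b1) (h2 : SlowlyVarying b2)
    (hc1 : ContinuousOn b1 (Ioo (0:ℝ) 1)) (hc2 : ContinuousOn b2 (Ioo (0:ℝ) 1))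
    (hmon : MonotoneOn b2 (Ioo (0:ℝ) 1))
    (hσ : IsSigma p b1 b2 σ) :
    ∃ c C : ℝ≥0∞, 0 < c ∧ C ≠ ⊤ ∧ ∀ g : β → ℝ, OKnorm p b1 ν g ≠ ⊤ → ∀ t ∈ Ioo (0:ℝ) 1,
      c * ((∫⁻ s in Ioo (0:ℝ) ((σ t) ^ p), (rearr ν g s * ENNReal.ofReal (b1 s)) ^ p) ^ (1/p)
            + ENNReal.ofReal t * ⨆ s ∈ Ico ((σ t) ^ p) 1, rearr ν g s * ENNReal.ofReal (b2 s)) ≤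
          Kfun (OKnorm p b1 ν) (OKnormInf b2 ν) g t ∧
      Kfun (OKnorm p b1 ν) (OKnormInf b2 ν) g t ≤
        C * ((∫⁻ s in Ioo (0:ℝ) ((σ t) ^ p), (rearr ν g s * ENNReal.ofReal (b1 s)) ^ p) ^ (1/p)
            + ENNReal.ofReal t * ⨆ s ∈ Ico ((σ t) ^ p) 1, rearr ν g s * ENNReal.ofReal (b2 s)) := by
  obtain ⟨CC, hCC0, hCCt, hlow⟩ := kfun_lower ν hp h1 h2 hσ
  refine ⟨CC⁻¹, 1, ENNReal.inv_pos.mpr hCCt, one_ne_top, ?_⟩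
  intro g hg t ht
  have hσt : σ t ∈ Ioo (0:ℝ) 1 := sigma_mem_Ioo hσ ht
  have ha : σ t ^ p ∈ Ioo (0:ℝ) 1 :=
    ⟨Real.rpow_pos_of_pos hσt.1 p, Real.rpow_lt_one hσt.1.le hσt.2 hp⟩
  constructor
  · rw [Kfun]
    refine le_iInf fun g0 => le_iInf fun g1 => le_iInf fun hdec => ?_
    have h := hlow g g0 g1 hdec t ht
    calc CC⁻¹ * ((∫⁻ s in Ioo (0:ℝ) ((σ t) ^ p),
            (rearr ν g s * ENNReal.ofReal (b1 s)) ^ p) ^ (1/p)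
          + ENNReal.ofReal t * ⨆ s ∈ Ico ((σ t) ^ p) 1, rearr ν g s * ENNReal.ofReal (b2 s))
        ≤ CC⁻¹ * (CC * (OKnorm p b1 ν g0 + ENNReal.ofReal t * OKnormInf b2 ν g1)) :=
          mul_le_mul_right h _
      _ = OKnorm p b1 ν g0 + ENNReal.ofReal t * OKnormInf b2 ν g1 := by
          rw [← mul_assoc, ENNReal.inv_mul_cancel hCC0 hCCt, one_mul]
  · rw [one_mul]
    exact kfun_upper ν p hp b1 b2 h1.1 h2.2.1 hmon g ht ha
end

section
/- Let p ∈ (0,∞) and let b_1, b_2 be slowly varying functions with associated σ. Every (p,b_1,b_2)-gaussible operator T is bounded from L^p(R,μ) to L^{p,b_1}(S,ν); that is, ‖Tf‖_{L^{p,b_1}(S,ν)} ≲ ‖f‖_{L^p(R,μ)} for every f ∈ L^p(R,μ). -/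
open MeasureTheory Set ENNReal Filter Topology

section Helpers

open MeasureTheory Set ENNReal

lemma rearr_antitone {γ : Type*} [MeasurableSpace γ] (m : Measure γ) (f : γ → ℝ) :
    Antitone (rearr m f) := by
  intro t t' h
  refine sInf_le_sInf fun lam hl => ?_
  exact le_trans hl (ENNReal.ofReal_le_ofReal h)

lemma rearr_lt_dist {γ : Type*} [MeasurableSpace γ] (m : Measure γ) (f : γ → ℝ) {t : ℝ}
    {lam : ℝ≥0∞} (h : lam < rearr m f t) :
    ENNReal.ofReal t < m {x | lam < ENNReal.ofReal |f x|} := by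
  by_contra hc
  push_neg at hc
  have hmem : lam ∈ {lam : ℝ≥0∞ | m {x | lam < ENNReal.ofReal |f x|} ≤ ENNReal.ofReal t} := hc
  exact absurd (sInf_le hmem : rearr m f t ≤ lam) h.not_ge

lemma vol_restrict_lt_ofReal (a : ℝ≥0∞) :
    (volume.restrict (Ioi (0:ℝ))) {l : ℝ | ENNReal.ofReal l < a} = a := by
  rw [Measure.restrict_apply' measurableSet_Ioi]
  rcases eq_or_ne a ⊤ with rfl | ha
  · have h : {l : ℝ | ENNReal.ofReal l < ⊤} ∩ Ioi 0 = Ioi 0 := by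
      ext l; simp [ENNReal.ofReal_lt_top]
    rw [h, Real.volume_Ioi]
  · have h : {l : ℝ | ENNReal.ofReal l < a} ∩ Ioi 0 = Ioo 0 a.toReal := by
      ext l
      simp only [mem_inter_iff, mem_setOf_eq, mem_Ioi, mem_Ioo]
      constructor
      · rintro ⟨h1, h2⟩
        exact ⟨h2, (ENNReal.ofReal_lt_iff_lt_toReal h2.le ha).mp h1⟩
      · rintro ⟨h1, h2⟩
        exact ⟨(ENNReal.ofReal_lt_iff_lt_toReal h1.le ha).mpr h2, h1⟩
    rw [h, Real.volume_Ioo, sub_zero, ENNReal.ofReal_toReal ha]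

lemma layercakeE {γ : Type*} [MeasurableSpace γ] (ρ : Measure γ) [SigmaFinite ρ]
    {ψ : γ → ℝ≥0∞} (hψ : Measurable ψ) :
    ∫⁻ x, ψ x ∂ρ = ∫⁻ l in Ioi (0:ℝ), ρ {x | ENNReal.ofReal l < ψ x} := by
  have hE : MeasurableSet {q : γ × ℝ | ENNReal.ofReal q.2 < ψ q.1} :=
    measurableSet_lt (ENNReal.measurable_ofReal.comp measurable_snd) (hψ.comp measurable_fst)
  have h1 : (ρ.prod (volume.restrict (Ioi (0:ℝ)))) {q : γ × ℝ | ENNReal.ofReal q.2 < ψ q.1}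
      = ∫⁻ x, ψ x ∂ρ := by
    rw [Measure.prod_apply hE]
    exact lintegral_congr fun x => vol_restrict_lt_ofReal (ψ x)
  have h2 : (ρ.prod (volume.restrict (Ioi (0:ℝ)))) {q : γ × ℝ | ENNReal.ofReal q.2 < ψ q.1}
      = ∫⁻ l in Ioi (0:ℝ), ρ {x | ENNReal.ofReal l < ψ x} :=
    Measure.prod_apply_symm hE
  rw [← h1, h2]

end Helpers
theorem stmt_8 {α β : Type*} [MeasurableSpace α] [MeasurableSpace β]
    (μ : Measure α) (ν : Measure β) [IsProbabilityMeasure μ] [IsProbabilityMeasure ν]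
    [NullSingletonClass μ] [NullSingletonClass ν]
    (p : ℝ) (hp : 0 < p) (b1 b2 σ σi : ℝ → ℝ)
    (h1 : SlowlyVarying b1) (h2 : SlowlyVarying b2)
    (hσ : IsSigma p b1 b2 σ) (hσi : IsSigmaInv σ σi)
    (T : (α → ℝ) → β → ℝ) (hT : Gaussible p b1 b2 σi μ ν T) :
    ∃ c : ℝ≥0∞, c ≠ ⊤ ∧ ∀ f : α → ℝ, MemLp f (ENNReal.ofReal p) μ →
      OKnorm p b1 ν (T f) ≤ c * eLpNorm f (ENNReal.ofReal p) μ := by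
  classical
  obtain ⟨c, hctop, hGauss⟩ := hT
  obtain ⟨hσmono, hσimage, hσ0, hσ1, hInt, hCpos, hσeq⟩ := hσ
  obtain ⟨hσiMaps, hσiInv⟩ := hσi
  set C : ℝ := ∫ s in Ioo (0:ℝ) 1, (b1 s / b2 s) ^ p with hCdef
  have hb1meas : Measurable b1 := h1.1
  have hb2meas : Measurable b2 := h2.1
  have hb1pos : ∀ t ∈ Ioo (0:ℝ) 1, 0 < b1 t := h1.2.1
  have hb2pos : ∀ t ∈ Ioo (0:ℝ) 1, 0 < b2 t := h2.2.1
  have hpinv : (0:ℝ) < 1/p := by positivity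
  refine ⟨(c * ENNReal.ofReal C) ^ (1/p), ENNReal.rpow_ne_top_of_nonneg hpinv.le
    (ENNReal.mul_ne_top hctop ENNReal.ofReal_ne_top), ?_⟩
  intro f hf
  have hhmeas : Measurable fun s : ℝ => (b1 s / b2 s) ^ p :=
    (hb1meas.div hb2meas).pow measurable_const
  set G : ℝ → ℝ := fun s => (σi (s ^ (1/p))) ^ p with hGdef
  have hrmem : ∀ s ∈ Ioo (0:ℝ) 1, ∀ q : ℝ, 0 < q → s ^ q ∈ Ioo (0:ℝ) 1 := by
    intro s hs q hq
    exact ⟨Real.rpow_pos_of_pos hs.1 q, Real.rpow_lt_one hs.1.le hs.2 hq⟩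
  have hσival : ∀ s ∈ Ioo (0:ℝ) 1, σ (σi s) = s := fun s hs =>
    (hσiInv s (Ioo_subset_Icc_self hs)).1
  have hσimem : ∀ s ∈ Ioo (0:ℝ) 1, σi s ∈ Ioo (0:ℝ) 1 := by
    intro s hs
    obtain ⟨hl, hr⟩ := hσiMaps (Ioo_subset_Icc_self hs)
    constructor
    · rcases hl.lt_or_eq with h' | h'
      · exact h'
      · exfalso
        have hv := hσival s hs
        rw [← h', hσ0] at hv
        exact hs.1.ne hv
    · rcases hr.lt_or_eq with h' | h'
      · exact h'
      · exfalso
        have hv := hσival s hs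
        rw [h', hσ1] at hv
        exact hs.2.ne' hv
  have hGmem : ∀ s ∈ Ioo (0:ℝ) 1, G s ∈ Ioo (0:ℝ) 1 := by
    intro s hs
    exact hrmem _ (hσimem _ (hrmem s hs _ hpinv)) p hp
  have hσiMono : ∀ a ∈ Icc (0:ℝ) 1, ∀ b ∈ Icc (0:ℝ) 1, a ≤ b → σi a ≤ σi b := by
    intro a ha b hb hab
    by_contra hlt
    push_neg at hlt
    have hmono := hσmono (hσiMaps hb) (hσiMaps ha) hlt
    rw [(hσiInv a ha).1, (hσiInv b hb).1] at hmono
    exact (not_lt.mpr hab) hmono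
  have hGmono : ∀ s ∈ Ioo (0:ℝ) 1, ∀ s' ∈ Ioo (0:ℝ) 1, s ≤ s' → G s ≤ G s' := by
    intro s hs s' hs' hss
    have ha : s ^ (1/p) ≤ s' ^ (1/p) := Real.rpow_le_rpow hs.1.le hss hpinv.le
    have hb : σi (s ^ (1/p)) ≤ σi (s' ^ (1/p)) :=
      hσiMono _ (Ioo_subset_Icc_self (hrmem s hs _ hpinv)) _
        (Ioo_subset_Icc_self (hrmem s' hs' _ hpinv)) ha
    exact Real.rpow_le_rpow (hσimem _ (hrmem s hs _ hpinv)).1.le hb hp.le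
  have hGint : ∀ s ∈ Ioo (0:ℝ) 1, C * G s = ∫ x in Ioo (0:ℝ) s, (b1 x / b2 x) ^ p := by
    intro s hs
    have hsmem := hrmem s hs _ hpinv
    have heq := hσeq (σi (s ^ (1/p))) (Ioo_subset_Icc_self (hσimem _ hsmem))
    rw [hσival _ hsmem] at heq
    have hsp : (s ^ (1/p)) ^ p = s := by
      rw [← Real.rpow_mul hs.1.le, one_div_mul_cancel hp.ne', Real.rpow_one]
    rw [hsp] at heq
    have hGs : G s = σi (s ^ (1/p)) ^ p := rfl
    rw [hGs, heq, ← mul_assoc, mul_inv_cancel₀ (ne_of_gt hCpos), one_mul]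
  -- rearrangement facts
  set φ : ℝ → ℝ≥0∞ := fun u => (rearr μ f u) ^ p with hφdef
  have hφanti : Antitone φ := fun a b hab => ENNReal.rpow_le_rpow (rearr_antitone μ f hab) hp.le
  set ψ : ℝ → ℝ≥0∞ := fun s => if s ≤ 0 then ⊤ else if s < 1 then φ (G s) else 0 with hψdef
  have hψeq : ∀ s ∈ Ioo (0:ℝ) 1, ψ s = φ (G s) := by
    intro s hs
    simp only [hψdef, if_neg (not_le.mpr hs.1), if_pos hs.2]
  have hψanti : Antitone ψ := by
    intro a b hab
    by_cases ha : a ≤ 0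
    · simp only [hψdef, if_pos ha]; exact le_top
    · push_neg at ha
      have hb0 : ¬ b ≤ 0 := not_le.mpr (ha.trans_le hab)
      by_cases hb1' : b < 1
      · have ha1 : a < 1 := lt_of_le_of_lt hab hb1'
        simp only [hψdef, if_neg (not_le.mpr ha), if_neg hb0, if_pos ha1, if_pos hb1']
        exact hφanti (hGmono a ⟨ha, ha1⟩ b ⟨ha.trans_le hab, hb1'⟩ hab)
      · simp only [hψdef, if_neg hb0, if_neg hb1']
        exact zero_le
  have hψmeas : Measurable ψ := hψanti.measurable
  -- the weighted measure ρ
  set ρ : Measure ℝ := (volume.restrict (Ioo (0:ℝ) 1)).withDensity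
      (fun s => ENNReal.ofReal ((b1 s / b2 s) ^ p)) with hρdef
  have hρapp : ∀ A : Set ℝ, MeasurableSet A →
      ρ A = ∫⁻ s in A ∩ Ioo (0:ℝ) 1, ENNReal.ofReal ((b1 s / b2 s) ^ p) := by
    intro A hA
    rw [hρdef, withDensity_apply _ hA, Measure.restrict_restrict hA]
  have hρfin : IsFiniteMeasure ρ := by
    constructor
    rw [hρapp univ MeasurableSet.univ, univ_inter]
    calc ∫⁻ s in Ioo (0:ℝ) 1, ENNReal.ofReal ((b1 s / b2 s) ^ p)
        ≤ ∫⁻ s in Ioo (0:ℝ) 1, (‖(b1 s / b2 s) ^ p‖₊ : ℝ≥0∞) := lintegral_mono fun s => by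
          rw [← enorm_eq_nnnorm, Real.enorm_eq_ofReal_abs]; exact ENNReal.ofReal_le_ofReal (le_abs_self _)
      _ < ⊤ := hInt.2
  haveI := hρfin
  -- measurable version of f
  have hfaem := hf.1
  set g : α → ℝ := hfaem.mk f with hgdef
  have hgmeas : Measurable g := hfaem.stronglyMeasurable_mk.measurable
  have hfg : f =ᵐ[μ] g := hfaem.ae_eq_mk
  set ψg : α → ℝ≥0∞ := fun x => (ENNReal.ofReal |g x|) ^ p with hψgdef
  have hψgmeas : Measurable ψg :=
    (ENNReal.measurable_ofReal.comp hgmeas.abs).pow measurable_const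
  -- step 1 : from Gaussible to the full interval
  set RT : ℝ → ℝ≥0∞ := fun s => (rearr ν (T f) s * ENNReal.ofReal (b1 s)) ^ p with hRTdef
  have hRTmeas : Measurable RT :=
    ((rearr_antitone ν (T f)).measurable.mul
      (ENNReal.measurable_ofReal.comp hb1meas)).pow measurable_const
  set Rf : ℝ → ℝ≥0∞ := fun s =>
      (rearr μ f ((σi (s ^ (1/p))) ^ p) * ENNReal.ofReal (b1 s / b2 s)) ^ p with hRfdef
  have hOK : ∫⁻ t in Ioo (0:ℝ) 1, (ENNReal.ofReal (b1 t) * rearr ν (T f) t) ^ p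
      ≤ c * ∫⁻ s in Ioo (0:ℝ) 1, Rf s := by
    have hcongr : ∀ s : Set ℝ, ∫⁻ t in s, (ENNReal.ofReal (b1 t) * rearr ν (T f) t) ^ p
        = ∫⁻ t in s, RT t := fun s => lintegral_congr fun t => by
      rw [hRTdef]; rw [mul_comm]
    rw [hcongr]
    have hU : (⋃ n : ℕ, Ioo (0:ℝ) (1 - 1/(n+2))) = Ioo 0 1 := by
      ext x
      simp only [mem_iUnion, mem_Ioo]
      constructor
      · rintro ⟨n, hx1, hx2⟩
        have hn : (0:ℝ) < 1/((n:ℝ)+2) := by positivity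
        exact ⟨hx1, by linarith⟩
      · rintro ⟨hx1, hx2⟩
        obtain ⟨n, hn⟩ := exists_nat_one_div_lt (by linarith : (0:ℝ) < 1 - x)
        refine ⟨n, hx1, ?_⟩
        have hpos : (0:ℝ) < (n:ℝ) + 1 := by positivity
        have h2 : 1/((n:ℝ)+2) ≤ 1/((n:ℝ)+1) :=
          one_div_le_one_div_of_le hpos (by linarith)
        linarith
    have hdir : Directed (· ⊆ ·) (fun n : ℕ => Ioo (0:ℝ) (1 - 1/(n+2))) := by
      intro m n
      rcases le_total ((1:ℝ) - 1/(m+2)) (1 - 1/(n+2)) with h' | h'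
      exacts [⟨n, Ioo_subset_Ioo_right h', subset_rfl⟩,
        ⟨m, subset_rfl, Ioo_subset_Ioo_right h'⟩]
    have hWD : ∀ s : Set ℝ, MeasurableSet s →
        ∫⁻ t in s, RT t = (volume.withDensity RT) s :=
      fun s hs => (withDensity_apply RT hs).symm
    conv_lhs => rw [hWD _ measurableSet_Ioo, ← hU, Directed.measure_iUnion hdir]
    refine iSup_le fun n => ?_
    rw [← hWD _ measurableSet_Ioo]
    have hn2 : (0:ℝ) < 1/((n:ℝ)+2) := by positivity
    have hn3 : 1/((n:ℝ)+2) ≤ 1/2 := by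
      apply one_div_le_one_div_of_le
      · norm_num
      · have : (0:ℝ) ≤ (n:ℝ) := Nat.cast_nonneg n
        linarith
    have htn : (1:ℝ) - 1/((n:ℝ)+2) ∈ Ioo (0:ℝ) 1 := ⟨by linarith, by linarith⟩
    calc ∫⁻ t in Ioo (0:ℝ) (1 - 1/((n:ℝ)+2)), RT t
        ≤ c * ∫⁻ s in Ioo (0:ℝ) (1 - 1/((n:ℝ)+2)), Rf s := hGauss f hf _ htn
      _ ≤ c * ∫⁻ s in Ioo (0:ℝ) 1, Rf s :=
          mul_le_mul_right (lintegral_mono_set (Ioo_subset_Ioo_right (by linarith))) c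
  -- step 2 : change of variables and layer cake
  have hperl : ∀ l : ℝ, ρ {s | ENNReal.ofReal l < ψ s}
      ≤ ENNReal.ofReal C * μ {x | ENNReal.ofReal l < ψg x} := by
    intro l
    set cl : ℝ≥0∞ := (ENNReal.ofReal l) ^ (1/p) with hcldef
    have hiff : ∀ y : ℝ≥0∞, (ENNReal.ofReal l < y ^ p ↔ cl < y) := by
      intro y
      constructor
      · intro hx
        have h' := ENNReal.rpow_lt_rpow hx hpinv
        rwa [← ENNReal.rpow_mul, mul_one_div_cancel hp.ne', ENNReal.rpow_one] at h'
      · intro hx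
        have h' := ENNReal.rpow_lt_rpow hx hp
        rwa [hcldef, ← ENNReal.rpow_mul, one_div_mul_cancel hp.ne', ENNReal.rpow_one] at h'
    have hd1 : μ {x | cl < ENNReal.ofReal |f x|} ≤ 1 := prob_le_one
    have hdne : μ {x | cl < ENNReal.ofReal |f x|} ≠ ⊤ := (hd1.trans_lt ENNReal.one_lt_top).ne
    have hsetg : {x | ENNReal.ofReal l < ψg x} = {x | cl < ENNReal.ofReal |g x|} := by
      ext x; exact hiff _
    have hDd : μ {x | cl < ENNReal.ofReal |g x|} = μ {x | cl < ENNReal.ofReal |f x|} := by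
      apply measure_congr
      filter_upwards [hfg] with x hx
      show (cl < ENNReal.ofReal |g x|) = (cl < ENNReal.ofReal |f x|)
      rw [hx]
    have key : ∀ u ∈ {s | ENNReal.ofReal l < ψ s} ∩ Ioo (0:ℝ) 1,
        G u ≤ (μ {x | cl < ENNReal.ofReal |f x|}).toReal := by
      rintro u ⟨huA, hu⟩
      have hGu := hGmem u hu
      have hψu : ENNReal.ofReal l < φ (G u) := by rw [← hψeq u hu]; exact huA
      have hlt : cl < rearr μ f (G u) := (hiff _).mp hψu
      have hdist := rearr_lt_dist μ f hlt
      have hmono := ENNReal.toReal_mono hdne hdist.le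
      rwa [ENNReal.toReal_ofReal hGu.1.le] at hmono
    have hIoc : ∀ u ∈ Ioo (0:ℝ) 1, ρ (Ioc 0 u)
        = ENNReal.ofReal C * ENNReal.ofReal (G u) := by
      intro u hu
      rw [hρapp _ measurableSet_Ioc]
      have hinter : Ioc (0:ℝ) u ∩ Ioo 0 1 = Ioc 0 u :=
        inter_eq_left.mpr fun x hx => ⟨hx.1, lt_of_le_of_lt hx.2 hu.2⟩
      rw [hinter]
      have hIooIoc : ∫⁻ s in Ioc (0:ℝ) u, ENNReal.ofReal ((b1 s / b2 s) ^ p)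
          = ∫⁻ s in Ioo (0:ℝ) u, ENNReal.ofReal ((b1 s / b2 s) ^ p) :=
        (setLIntegral_congr Ioo_ae_eq_Ioc).symm
      have hsub : Ioo (0:ℝ) u ⊆ Ioo (0:ℝ) 1 := fun x hx => ⟨hx.1, hx.2.trans hu.2⟩
      rw [hIooIoc, ← ofReal_integral_eq_lintegral_ofReal
        (hInt.mono_set hsub)
        ((ae_restrict_iff' measurableSet_Ioo).mpr (ae_of_all _ fun x hx =>
          Real.rpow_nonneg (div_nonneg (hb1pos x (hsub hx)).le
            (hb2pos x (hsub hx)).le) p)),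
        ← hGint u hu, ENNReal.ofReal_mul hCpos.le]
    have hAmeas : MeasurableSet {s | ENNReal.ofReal l < ψ s} :=
      measurableSet_lt measurable_const hψmeas
    set A := {s | ENNReal.ofReal l < ψ s} ∩ Ioo (0:ℝ) 1 with hAdef
    have hρS : ρ {s | ENNReal.ofReal l < ψ s} = ρ A := by
      rw [hAdef]
      rw [hρapp _ hAmeas, hρapp _ (hAmeas.inter measurableSet_Ioo), inter_assoc, inter_self]
    rcases A.eq_empty_or_nonempty with hA | hA
    · rw [hρS, hA, measure_empty]; exact zero_le
    have hbddA : BddAbove A := ⟨1, fun x hx => hx.2.2.le⟩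
    have hs₀le : ∀ x ∈ A, x ≤ sSup A := fun x hx => le_csSup hbddA hx
    have hfinal : ENNReal.ofReal C
        * ENNReal.ofReal ((μ {x | cl < ENNReal.ofReal |f x|}).toReal)
        = ENNReal.ofReal C * μ {x | ENNReal.ofReal l < ψg x} := by
      rw [ENNReal.ofReal_toReal hdne, hsetg, hDd]
    by_cases hs₀A : sSup A ∈ A
    · have hsub : A ⊆ Ioc 0 (sSup A) := fun x hx => ⟨hx.2.1, hs₀le x hx⟩
      calc ρ {s | ENNReal.ofReal l < ψ s} = ρ A := hρS
        _ ≤ ρ (Ioc 0 (sSup A)) := measure_mono hsub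
        _ = ENNReal.ofReal C * ENNReal.ofReal (G (sSup A)) := hIoc _ hs₀A.2
        _ ≤ ENNReal.ofReal C
            * ENNReal.ofReal ((μ {x | cl < ENNReal.ofReal |f x|}).toReal) :=
            mul_le_mul_right (ENNReal.ofReal_le_ofReal (key _ hs₀A)) _
        _ = ENNReal.ofReal C * μ {x | ENNReal.ofReal l < ψg x} := hfinal
    · have hex : ∀ n : ℕ, ∃ u, u ∈ A ∧ sSup A - 1/((n:ℝ)+1) < u := by
        intro n
        have hlt : sSup A - 1/((n:ℝ)+1) < sSup A := by
          have : (0:ℝ) < 1/((n:ℝ)+1) := by positivity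
          linarith
        obtain ⟨u, hu, hul⟩ := exists_lt_of_lt_csSup hA hlt
        exact ⟨u, hu, hul⟩
      choose u hu hul using hex
      have hcover : A ⊆ ⋃ n, Ioc 0 (u n) := by
        intro x hx
        have hxlt : x < sSup A := lt_of_le_of_ne (hs₀le x hx) (fun hxe => hs₀A (hxe ▸ hx))
        obtain ⟨n, hn⟩ := exists_nat_one_div_lt (by linarith : (0:ℝ) < sSup A - x)
        refine mem_iUnion.mpr ⟨n, hx.2.1, ?_⟩
        have := hul n
        linarith
      have hdir2 : Directed (· ⊆ ·) fun n => Ioc (0:ℝ) (u n) := by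
        intro m n
        rcases le_total (u m) (u n) with h' | h'
        exacts [⟨n, Ioc_subset_Ioc_right h', subset_rfl⟩,
          ⟨m, subset_rfl, Ioc_subset_Ioc_right h'⟩]
      calc ρ {s | ENNReal.ofReal l < ψ s} = ρ A := hρS
        _ ≤ ρ (⋃ n, Ioc 0 (u n)) := measure_mono hcover
        _ = ⨆ n, ρ (Ioc 0 (u n)) := Directed.measure_iUnion hdir2
        _ ≤ ENNReal.ofReal C
            * ENNReal.ofReal ((μ {x | cl < ENNReal.ofReal |f x|}).toReal) := by
            refine iSup_le fun n => ?_
            rw [hIoc _ (hu n).2]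
            exact mul_le_mul_right (ENNReal.ofReal_le_ofReal (key _ (hu n))) _
        _ = ENNReal.ofReal C * μ {x | ENNReal.ofReal l < ψg x} := hfinal
  have hstep2 : ∫⁻ s in Ioo (0:ℝ) 1, Rf s
      ≤ ENNReal.ofReal C * ∫⁻ x, (‖f x‖₊ : ℝ≥0∞) ^ p ∂μ := by
    have h2a : ∫⁻ s in Ioo (0:ℝ) 1, Rf s
        = ∫⁻ s in Ioo (0:ℝ) 1, ψ s * ENNReal.ofReal ((b1 s / b2 s) ^ p) := by
      refine setLIntegral_congr_fun measurableSet_Ioo (fun s hs => ?_)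
      rw [hRfdef]
      simp only
      rw [hψeq s hs, hφdef]
      simp only
      rw [ENNReal.mul_rpow_of_nonneg _ _ hp.le,
        ENNReal.ofReal_rpow_of_nonneg (div_nonneg (hb1pos s hs).le (hb2pos s hs).le) hp.le]
    have h2b : ∫⁻ s in Ioo (0:ℝ) 1, ψ s * ENNReal.ofReal ((b1 s / b2 s) ^ p)
        = ∫⁻ s, ψ s ∂ρ := by
      rw [hρdef, lintegral_withDensity_eq_lintegral_mul _ hhmeas.ennreal_ofReal hψmeas]
      simp only [Pi.mul_apply]
      exact lintegral_congr fun s => (mul_comm _ _)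
    calc ∫⁻ s in Ioo (0:ℝ) 1, Rf s = ∫⁻ s, ψ s ∂ρ := by rw [h2a, h2b]
      _ = ∫⁻ l in Ioi (0:ℝ), ρ {x | ENNReal.ofReal l < ψ x} := layercakeE ρ hψmeas
      _ ≤ ∫⁻ l in Ioi (0:ℝ), ENNReal.ofReal C * μ {x | ENNReal.ofReal l < ψg x} :=
          lintegral_mono fun l => hperl l
      _ = ENNReal.ofReal C * ∫⁻ l in Ioi (0:ℝ), μ {x | ENNReal.ofReal l < ψg x} :=
          lintegral_const_mul' _ _ ENNReal.ofReal_ne_top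
      _ = ENNReal.ofReal C * ∫⁻ x, ψg x ∂μ := by rw [← layercakeE μ hψgmeas]
      _ = ENNReal.ofReal C * ∫⁻ x, (‖f x‖₊ : ℝ≥0∞) ^ p ∂μ := by
          refine congrArg _ (lintegral_congr_ae ?_)
          filter_upwards [hfg] with x hx
          rw [hψgdef]
          simp only
          rw [← hx, ← Real.enorm_eq_ofReal_abs]
          rfl
  have hEnorm : eLpNorm f (ENNReal.ofReal p) μ
      = (∫⁻ x, (‖f x‖₊ : ℝ≥0∞) ^ p ∂μ) ^ (1/p) := by
    rw [eLpNorm_eq_lintegral_rpow_enorm_toReal (ENNReal.ofReal_pos.mpr hp).ne'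
      ENNReal.ofReal_ne_top, ENNReal.toReal_ofReal hp.le]
    rfl
  unfold OKnorm
  rw [hEnorm]
  calc (∫⁻ t in Ioo (0:ℝ) 1, (ENNReal.ofReal (b1 t) * rearr ν (T f) t) ^ p) ^ (1/p)
      ≤ ((c * ENNReal.ofReal C) * ∫⁻ x, (‖f x‖₊ : ℝ≥0∞) ^ p ∂μ) ^ (1/p) := by
        refine ENNReal.rpow_le_rpow ?_ hpinv.le
        calc ∫⁻ t in Ioo (0:ℝ) 1, (ENNReal.ofReal (b1 t) * rearr ν (T f) t) ^ p
            ≤ c * ∫⁻ s in Ioo (0:ℝ) 1, Rf s := hOK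
          _ ≤ c * (ENNReal.ofReal C * ∫⁻ x, (‖f x‖₊ : ℝ≥0∞) ^ p ∂μ) :=
              mul_le_mul_right hstep2 c
          _ = (c * ENNReal.ofReal C) * ∫⁻ x, (‖f x‖₊ : ℝ≥0∞) ^ p ∂μ :=
              (mul_assoc _ _ _).symm
      _ = (c * ENNReal.ofReal C) ^ (1/p) * (∫⁻ x, (‖f x‖₊ : ℝ≥0∞) ^ p ∂μ) ^ (1/p) :=
          ENNReal.mul_rpow_of_nonneg _ _ hpinv.le
end
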